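/- arXiv:1409.4133 — 6 statements merged into one kernel-verified Lean document; each statement's English description precedes it below -/
import Mathlib

section
/- Let V^λ be a highest weight module over a complex semisimple Lie algebra, with highest weight vector v_λ, such that U(g_{I_0})·v_λ is a simple g_{I_0}-module for some I_0 ⊆ I. If J, J' ⊆ I_0 satisfy J ∩ supp(λ) ≠ J' ∩ supp(λ), then wt_J V^λ ≠ wt_{J'} V^λ. In particular, the map J ↦ wt_J V^λ is injective on subsets of I_0 ∩ supp(λ). -/
open scoped RealInnerProductSpace

/-- The `ℕ`-cone (additive submonoid) generated by the simple roots indexed by `J`,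
i.e. `ℤ_{≥0} Δ_J`. -/
def nnCone {ι E : Type*} [AddCommMonoid E] (α : ι → E) (J : Set ι) : AddSubmonoid E :=
  AddSubmonoid.closure (α '' J)

/-- The standard parabolic subset of weights `wt_J V^λ := (λ - ℤ_{≥0} Δ_J) ∩ wt V^λ`. -/
def wtJ {ι E : Type*} [AddCommGroup E] (α : ι → E) (lam : E) (wt : Set E) (J : Set ι) :
    Set E :=
  {μ ∈ wt | lam - μ ∈ nnCone α J}

/-- Iterated lowering-operator monomials applied to a vector. -/
def monom {ι V : Type*} [AddCommGroup V] [Module ℂ V] (F : ι → V →ₗ[ℂ] V) (v : V) :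
    List ι → V
  | [] => v
  | i :: l => F i (monom F v l)

/-- An abstract axiomatization of a highest weight module over a complex semisimple Lie
algebra, with simple roots `α : ι → E` (in the dual of the Cartan subalgebra), highest
weight `lam`, weight-space decomposition `wtSp`, lowering (Chevalley) operators `F i`
(for `x_{α_i}^-`), raising operators `Ep i` (for `x_{α_i}^+`), highest weight vector
`vlam`, and coroot pairing `κ μ i` (for `μ(h_i)`). -/
structure IsHWModule {ι E V : Type*} [AddCommGroup E] [AddCommGroup V] [Module ℂ V]
    (α : ι → E) (lam : E) (wtSp : E → Submodule ℂ V) (F Ep : ι → V →ₗ[ℂ] V)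
    (vlam : V) (κ : E → ι → ℂ) : Prop where
  vlam_ne : vlam ≠ 0
  vlam_mem : vlam ∈ wtSp lam
  F_wt : ∀ i μ, ∀ v ∈ wtSp μ, F i v ∈ wtSp (μ - α i)
  E_wt : ∀ i μ, ∀ v ∈ wtSp μ, Ep i v ∈ wtSp (μ + α i)
  hw : ∀ i, Ep i vlam = 0
  gen : Submodule.span ℂ (Set.range (monom F vlam)) = ⊤
  indep : ∀ μ ν : E, μ ≠ ν → ∀ v, v ∈ wtSp μ → v ∈ wtSp ν → v = 0
  sl2 : ∀ i μ, ∀ v ∈ wtSp μ, Ep i (F i v) = F i (Ep i v) + κ μ i • v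
  offdiag : ∀ i j, i ≠ j → ∀ v : V, Ep i (F j v) = F j (Ep i v)

/-- The set of weights of the module: those `μ` with nonzero weight space. -/
def wtSet {E V : Type*} [AddCommGroup V] [Module ℂ V] (wtSp : E → Submodule ℂ V) :
    Set E :=
  {μ | wtSp μ ≠ ⊥}

/-- The set of weights of a submodule `N`. -/
def wtOf {E V : Type*} [AddCommGroup V] [Module ℂ V] (wtSp : E → Submodule ℂ V)
    (N : Submodule ℂ V) : Set E :=
  {μ | ∃ v ∈ N, v ∈ wtSp μ ∧ v ≠ 0}

/-- The submodule `U(g_J) · v` (spanned by lowering monomials in directions `J`). -/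
def genSub {ι V : Type*} [AddCommGroup V] [Module ℂ V] (F : ι → V →ₗ[ℂ] V) (v : V)
    (J : Set ι) : Submodule ℂ V :=
  Submodule.span ℂ {w | ∃ l : List ι, (∀ i ∈ l, i ∈ J) ∧ w = monom F v l}

/-- The set `J(V^λ)` of integrable simple directions:
`{i : λ(h_i) ∈ ℤ_{≥0}, (x_{α_i}^-)^{λ(h_i)+1} v_λ = 0}`. -/
def integrable {ι E V : Type*} [AddCommGroup V] [Module ℂ V]
    (F : ι → V →ₗ[ℂ] V) (vlam : V) (κ : E → ι → ℂ) (lam : E) : Set ι :=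
  {i | ∃ n : ℕ, κ lam i = (n : ℂ) ∧ (F i ^ (n + 1)) vlam = 0}

/-- `N₀` is a simple module for the subalgebra `g_{I0}`. -/
def IsModSimple {ι V : Type*} [AddCommGroup V] [Module ℂ V] (F Ep : ι → V →ₗ[ℂ] V)
    (I0 : Set ι) (N₀ : Submodule ℂ V) : Prop :=
  ∀ N : Submodule ℂ V, N ≤ N₀ → N ≠ ⊥ →
    (∀ j ∈ I0, ∀ v ∈ N, F j v ∈ N) → (∀ j ∈ I0, ∀ v ∈ N, Ep j v ∈ N) → N = N₀

/-- In a cone generated by linearly independent vectors, membership of a generator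
detects the index. -/
lemma alpha_mem_nnCone_iff {ι E : Type*} [AddCommGroup E] [Module ℝ E]
    (α : ι → E) (hα : LinearIndependent ℝ α) (J : Set ι) (i : ι) :
    α i ∈ nnCone α J ↔ i ∈ J := by
  constructor
  · intro h
    by_contra hi
    have hle : nnCone α J ≤ (Submodule.span ℝ (α '' J)).toAddSubmonoid :=
      AddSubmonoid.closure_le.mpr Submodule.subset_span
    exact hα.notMem_span_image hi (hle h)
  · intro h
    exact AddSubmonoid.subset_closure ⟨i, h, rfl⟩
/-- if `U(g_{I₀})·v_λ` is simple and `J ∩ supp(λ) ≠ J' ∩ supp(λ)` for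
`J, J' ⊆ I₀`, then `wt_J V^λ ≠ wt_{J'} V^λ`; in particular `J ↦ wt_J V^λ` is injective
on subsets of `I₀ ∩ supp(λ)`. -/
theorem wtJ_ne_of_supp_ne {ι E V : Type*} [NormedAddCommGroup E] [InnerProductSpace ℝ E]
    [AddCommGroup V] [Module ℂ V]
    (α : ι → E) (lam : E) (wtSp : E → Submodule ℂ V) (F Ep : ι → V →ₗ[ℂ] V)
    (vlam : V) (κ : E → ι → ℂ)
    (hα : LinearIndependent ℝ α)
    (hκ : ∀ (μ : E) (i : ι), κ μ i = ((2 * ⟪μ, α i⟫ / ⟪α i, α i⟫ : ℝ) : ℂ))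
    (hHW : IsHWModule α lam wtSp F Ep vlam κ)
    (I0 : Set ι) (hsimple : IsModSimple F Ep I0 (genSub F vlam I0)) :
    (∀ J J' : Set ι, J ⊆ I0 → J' ⊆ I0 →
        J ∩ {i | ⟪lam, α i⟫ ≠ 0} ≠ J' ∩ {i | ⟪lam, α i⟫ ≠ 0} →
        wtJ α lam (wtSet wtSp) J ≠ wtJ α lam (wtSet wtSp) J') ∧
    Set.InjOn (fun J : Set ι => wtJ α lam (wtSet wtSp) J)
      {J : Set ι | J ⊆ I0 ∩ {i | ⟪lam, α i⟫ ≠ 0}} := by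
  -- key: if i ∈ J, λ(h_i) ≠ 0 and i ∉ J' then the wtJ sets differ
  have key : ∀ J J' : Set ι, ∀ i : ι, i ∈ J → ⟪lam, α i⟫ ≠ 0 → i ∉ J' →
      wtJ α lam (wtSet wtSp) J ≠ wtJ α lam (wtSet wtSp) J' := by
    intro J J' i hiJ hsupp hiJ' heq
    -- F i vlam ≠ 0
    have hFne : F i vlam ≠ 0 := by
      intro h0
      have hs := hHW.sl2 i lam vlam hHW.vlam_mem
      rw [h0, hHW.hw i, map_zero, map_zero, zero_add] at hs
      have hκne : κ lam i ≠ 0 := by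
        rw [hκ]
        have hαne : α i ≠ 0 := hα.ne_zero i
        have hd : ⟪α i, α i⟫ ≠ 0 := fun h => hαne (inner_self_eq_zero.mp h)
        simp only [ne_eq, Complex.ofReal_eq_zero]
        exact div_ne_zero (by simpa using hsupp) hd
      exact hHW.vlam_ne (by
        have := hs.symm
        exact (smul_eq_zero.mp this).resolve_left hκne)
    have hwt : lam - α i ∈ wtSet wtSp := by
      intro hbot
      have := hHW.F_wt i lam vlam hHW.vlam_mem
      rw [hbot] at this
      exact hFne (Submodule.mem_bot ℂ |>.mp this)
    have h1 : lam - α i ∈ wtJ α lam (wtSet wtSp) J := by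
      refine ⟨hwt, ?_⟩
      rw [sub_sub_cancel]
      exact (alpha_mem_nnCone_iff α hα J i).mpr hiJ
    rw [heq] at h1
    obtain ⟨-, hc⟩ := h1
    rw [sub_sub_cancel] at hc
    exact hiJ' ((alpha_mem_nnCone_iff α hα J' i).mp hc)
  constructor
  · intro J J' _ _ hne
    obtain ⟨i, hi⟩ : ∃ i, (i ∈ J ∩ {i | ⟪lam, α i⟫ ≠ 0} ∧ i ∉ J' ∩ {i | ⟪lam, α i⟫ ≠ 0}) ∨
        (i ∈ J' ∩ {i | ⟪lam, α i⟫ ≠ 0} ∧ i ∉ J ∩ {i | ⟪lam, α i⟫ ≠ 0}) := by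
      by_contra h
      push_neg at h
      exact hne (Set.ext fun i => by have := h i; tauto)
    rcases hi with ⟨⟨h1, h2⟩, h3⟩ | ⟨⟨h1, h2⟩, h3⟩
    · have hiJ' : i ∉ J' := fun hJ' => h3 ⟨hJ', h2⟩
      exact key J J' i h1 h2 hiJ'
    · have hiJ : i ∉ J := fun hJ => h3 ⟨hJ, h2⟩
      exact (key J' J i h1 h2 hiJ).symm
  · intro J hJ J' hJ' heq
    by_contra hne
    obtain ⟨i, hi⟩ : ∃ i, (i ∈ J ∧ i ∉ J') ∨ (i ∈ J' ∧ i ∉ J) := by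
      by_contra h
      push_neg at h
      exact hne (Set.ext fun i => by have := h i; tauto)
    rcases hi with ⟨h1, h2⟩ | ⟨h1, h2⟩
    · exact key J J' i h1 (hJ h1).2 h2 heq
    · exact key J' J i h1 (hJ' h1).2 h2 heq.symm
end

section
/- Let g be a complex semisimple Lie algebra and λ ∈ h* with λ(h_i) ≠ 0 for every i ∈ I. Then for every highest weight module V^λ with highest weight λ, the assignment J ↦ wt_J V^λ is an injective map from the power set of I to subsets of wt V^λ. -/
open scoped RealInnerProductSpace

/-- if `λ(h_i) ≠ 0` for every `i ∈ I`, then `J ↦ wt_J V^λ` is injective on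
the power set of `I`, for every highest weight module `V^λ`. -/
theorem wtJ_injective_of_regular {ι E V : Type*} [NormedAddCommGroup E]
    [InnerProductSpace ℝ E] [AddCommGroup V] [Module ℂ V]
    (α : ι → E) (lam : E) (wtSp : E → Submodule ℂ V) (F Ep : ι → V →ₗ[ℂ] V)
    (vlam : V) (κ : E → ι → ℂ)
    (hα : LinearIndependent ℝ α)
    (hκ : ∀ (μ : E) (i : ι), κ μ i = ((2 * ⟪μ, α i⟫ / ⟪α i, α i⟫ : ℝ) : ℂ))
    (hHW : IsHWModule α lam wtSp F Ep vlam κ)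
    (hreg : ∀ i : ι, κ lam i ≠ 0) :
    Function.Injective (fun J : Set ι => wtJ α lam (wtSet wtSp) J) := by
  have key : ∀ J J' : Set ι, wtJ α lam (wtSet wtSp) J ⊆ wtJ α lam (wtSet wtSp) J' →
      J ⊆ J' := by
    intro J J' hsub i hi
    have hF : F i vlam ≠ 0 := by
      intro h0
      have hsl := hHW.sl2 i lam vlam hHW.vlam_mem
      rw [h0, hHW.hw i, map_zero, map_zero, zero_add] at hsl
      rcases smul_eq_zero.mp hsl.symm with h | h
      · exact hreg i h
      · exact hHW.vlam_ne h
    have hmem : lam - α i ∈ wtJ α lam (wtSet wtSp) J := by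
      constructor
      · exact Submodule.ne_bot_iff _ |>.mpr ⟨F i vlam, hHW.F_wt i lam vlam hHW.vlam_mem, hF⟩
      · rw [sub_sub_cancel]
        exact AddSubmonoid.subset_closure ⟨i, hi, rfl⟩
    have hmem' := hsub hmem
    have hcone : α i ∈ nnCone α J' := by
      have := hmem'.2
      rwa [sub_sub_cancel] at this
    by_contra hnot
    have hle : nnCone α J' ≤ (Submodule.span ℝ (α '' J')).toAddSubmonoid :=
      AddSubmonoid.closure_le.mpr Submodule.subset_span
    exact hα.notMem_span_image hnot (hle hcone)
  intro J J' h
  simp only at h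
  exact le_antisymm (key J J' h.le) (key J' J h.ge)
end

section
/- Let V^λ be a highest weight module and J ⊆ J(V^λ). Then the vertices (extreme points) of the convex polytope conv_R(wt_J V^λ) are precisely the Weyl orbit W_J(λ). -/
open scoped RealInnerProductSpace

/-- The simple reflection in the hyperplane orthogonal to `a`. -/
noncomputable def sRefl {E : Type*} [NormedAddCommGroup E] [InnerProductSpace ℝ E]
    [FiniteDimensional ℝ E] (a : E) : E ≃ₗᵢ[ℝ] E :=
  Submodule.reflection ((Submodule.span ℝ {a})ᗮ)

/-- The parabolic subgroup `W_K` of the Weyl group, generated by the simple reflections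
`s_k`, `k ∈ K`. -/
noncomputable def weylGrp {ι E : Type*} [NormedAddCommGroup E] [InnerProductSpace ℝ E]
    [FiniteDimensional ℝ E] (α : ι → E) (K : Set ι) : Subgroup (E ≃ₗᵢ[ℝ] E) :=
  Subgroup.closure ((fun i => sRefl (α i)) '' K)

/-- The orbit `W_K(λ)`. -/
noncomputable def weylOrbit {ι E : Type*} [NormedAddCommGroup E] [InnerProductSpace ℝ E]
    [FiniteDimensional ℝ E] (α : ι → E) (K : Set ι) (lam : E) : Set E :=
  (fun w : E ≃ₗᵢ[ℝ] E => w lam) '' (weylGrp α K : Set (E ≃ₗᵢ[ℝ] E))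

set_option linter.unusedSectionVars false

namespace VWJAux
open Submodule Set

variable {ι E : Type*} [NormedAddCommGroup E] [InnerProductSpace ℝ E]
    [FiniteDimensional ℝ E]

variable (α : ι → E)

def wtL : List ι → E
  | [] => 0
  | i :: l => α i + wtL l

@[simp] lemma wtL_nil : wtL α [] = 0 := rfl
@[simp] lemma wtL_cons (i : ι) (l : List ι) : wtL α (i :: l) = α i + wtL α l := rfl

lemma wtL_mem_cone (l : List ι) : wtL α l ∈ nnCone α Set.univ := by
  induction l with
  | nil => exact (nnCone α Set.univ).zero_mem
  | cons i l ih =>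
    exact (nnCone α Set.univ).add_mem
      (AddSubmonoid.subset_closure ⟨i, trivial, rfl⟩) ih

lemma nnCone_le_span (K : Set ι) : ∀ x ∈ nnCone α K, x ∈ span ℝ (Set.range α) := by
  intro x hx
  refine AddSubmonoid.closure_induction (fun y hy => ?_) (zero_mem _)
    (fun y z _ _ hy hz => add_mem hy hz) hx
  obtain ⟨j, -, rfl⟩ := hy
  exact subset_span ⟨j, rfl⟩

lemma wtL_mem_span (l : List ι) : wtL α l ∈ span ℝ (Set.range α) :=
  nnCone_le_span α Set.univ _ (wtL_mem_cone α l)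

variable {α}

section Coord

variable (hα : LinearIndependent ℝ α)

noncomputable def bas : Module.Basis (↥(hα.linearIndepOn_id.extend (Set.subset_univ _))) ℝ E :=
  Module.Basis.extend hα.linearIndepOn_id

noncomputable def coordφ (i : ι) : E →ₗ[ℝ] ℝ :=
  (bas hα).coord ⟨α i, hα.linearIndepOn_id.subset_extend _ ⟨i, rfl⟩⟩

noncomputable def phiJ : E →ₗ[ℝ] ℝ := (bas hα).sumCoords

lemma bas_apply (i : ι) :
    bas hα ⟨α i, hα.linearIndepOn_id.subset_extend _ ⟨i, rfl⟩⟩ = α i :=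
  Module.Basis.extend_apply_self _ _

open scoped Classical in
lemma coord_val (idx idx' : ↥(hα.linearIndepOn_id.extend (Set.subset_univ _))) :
    (bas hα).coord idx idx'.val = if idx' = idx then 1 else 0 := by
  classical
  rw [Module.Basis.coord_apply,
    show (idx'.val : E) = bas hα idx' from (Module.Basis.extend_apply_self _ _).symm,
    Module.Basis.repr_self, Finsupp.single_apply]

lemma coordφ_self (i : ι) : coordφ hα i (α i) = 1 := by
  rw [coordφ, coord_val hα _ ⟨α i, hα.linearIndepOn_id.subset_extend _ ⟨i, rfl⟩⟩, if_pos rfl]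

lemma coordφ_ne {i j : ι} (h : i ≠ j) : coordφ hα i (α j) = 0 := by
  rw [coordφ, coord_val hα _ ⟨α j, hα.linearIndepOn_id.subset_extend _ ⟨j, rfl⟩⟩, if_neg]
  intro he
  exact h (hα.injective (congrArg Subtype.val he)).symm

lemma phiJ_apply (j : ι) : phiJ hα (α j) = 1 := by
  have key : ∀ idx : ↥(hα.linearIndepOn_id.extend (Set.subset_univ _)),
      (bas hα).sumCoords idx.val = 1 := by
    intro idx
    rw [show (idx.val : E) = bas hα idx from (Module.Basis.extend_apply_self _ _).symm,
      Module.Basis.sumCoords_self_apply]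
  exact key ⟨α j, hα.linearIndepOn_id.subset_extend _ ⟨j, rfl⟩⟩

lemma exists_nat_coord {K : Set ι} {x : E} (hx : x ∈ nnCone α K) (i : ι) :
    ∃ n : ℕ, coordφ hα i x = n := by
  refine AddSubmonoid.closure_induction (fun y hy => ?_) ⟨0, by simp⟩
    (fun y z _ _ ⟨n, hn⟩ ⟨m, hm⟩ => ⟨n + m, by rw [map_add, hn, hm]; push_cast; ring⟩) hx
  obtain ⟨j, -, rfl⟩ := hy
  by_cases h : i = j
  · subst h; exact ⟨1, by rw [coordφ_self]; norm_num⟩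
  · exact ⟨0, by rw [coordφ_ne hα h]; norm_num⟩

lemma coord_nonneg {K : Set ι} {x : E} (hx : x ∈ nnCone α K) (i : ι) :
    0 ≤ coordφ hα i x := by
  obtain ⟨n, hn⟩ := exists_nat_coord hα hx i
  rw [hn]; positivity

lemma coord_eq_zero {K : Set ι} {x : E} (hx : x ∈ nnCone α K) {i : ι} (hi : i ∉ K) :
    coordφ hα i x = 0 := by
  refine AddSubmonoid.closure_induction (fun y hy => ?_) (by simp)
    (fun y z _ _ hy hz => by rw [map_add, hy, hz, add_zero]) hx
  obtain ⟨j, hj, rfl⟩ := hy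
  refine coordφ_ne hα (fun he => ?_)
  subst he; exact hi hj

lemma coordφ_eq_coeff {c : E →₀ ℝ} (hc : ↑c.support ⊆ Set.range α) (i : ι) :
    coordφ hα i (c.sum fun mi r => r • mi) = c (α i) := by
  classical
  rw [Finsupp.sum, map_sum]
  have : ∀ e ∈ c.support, coordφ hα i (c e • e) = if e = α i then c e else 0 := by
    intro e he
    obtain ⟨j, rfl⟩ := hc he
    rw [map_smul, smul_eq_mul]
    by_cases h : i = j
    · subst h; rw [coordφ_self, if_pos rfl, mul_one]
    · rw [coordφ_ne hα h, if_neg (fun he' => h (hα.injective he'.symm)), mul_zero]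
  rw [Finset.sum_congr rfl this, Finset.sum_ite_eq' c.support (α i) (fun e => c e)]
  by_cases h : α i ∈ c.support
  · rw [if_pos h]
  · rw [if_neg h, (Finsupp.notMem_support_iff).1 h]

lemma mem_nnCone_of {K : Set ι} {x : E} (hx : x ∈ span ℝ (Set.range α))
    (hnat : ∀ i, ∃ n : ℕ, coordφ hα i x = n)
    (hsupp : ∀ i, i ∉ K → coordφ hα i x = 0) : x ∈ nnCone α K := by
  obtain ⟨c, hc, rfl⟩ := Submodule.mem_span_set.1 hx
  rw [Finsupp.sum]
  refine AddSubmonoid.sum_mem _ (fun e he => ?_)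
  obtain ⟨j, rfl⟩ := hc he
  have hcj : c (α j) = coordφ hα j (c.sum fun mi r => r • mi) :=
    (coordφ_eq_coeff hα hc j).symm
  have hjK : j ∈ K := by
    by_contra hjK
    have := hsupp j hjK
    rw [← hcj] at this
    exact (Finsupp.mem_support_iff.1 he) this
  obtain ⟨n, hn⟩ := hnat j
  rw [← hcj] at hn
  rw [hn, Nat.cast_smul_eq_nsmul]
  exact AddSubmonoid.nsmul_mem (nnCone α K)
    (AddSubmonoid.subset_closure (show α j ∈ α '' K from ⟨j, hjK, rfl⟩)) n

lemma sep {x : E} (hx : x ∈ span ℝ (Set.range α)) (hx0 : x ≠ 0) :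
    ∃ i, ⟪x, α i⟫ ≠ 0 := by
  by_contra h
  push_neg at h
  have hxo : x ∈ (span ℝ (Set.range α))ᗮ := by
    rw [Submodule.mem_orthogonal']
    intro u hu
    refine Submodule.span_induction (fun y hy => ?_) (by simp)
      (fun y z _ _ hy hz => by rw [inner_add_right, hy, hz, add_zero])
      (fun r y _ hy => by rw [inner_smul_right, hy, mul_zero]) hu
    obtain ⟨j, rfl⟩ := hy
    exact h j
  have hb : x ∈ (⊥ : Submodule ℝ E) :=
    (span ℝ (Set.range α)).orthogonal_disjoint.le_bot (Submodule.mem_inf.2 ⟨hx, hxo⟩)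
  exact hx0 ((Submodule.mem_bot ℝ).1 hb)

end Coord

section ConvexPart

lemma sRefl_apply {a : E} (ha : a ≠ 0) (x : E) :
    sRefl a x = x - (2 * ⟪x, a⟫ / ⟪a, a⟫) • a := by
  have h1 : (Submodule.span ℝ {a})ᗮ.starProjection x
      = x - (⟪a, x⟫ / ⟪a, a⟫) • a := by
    rw [Submodule.starProjection_orthogonal_val, Submodule.starProjection_singleton]
    simp [real_inner_self_eq_norm_sq]
  show Submodule.reflection ((Submodule.span ℝ {a})ᗮ) x = x - (2 * ⟪x, a⟫ / ⟪a, a⟫) • a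
  rw [Submodule.reflection_apply, h1]
  have hsc : (2 * ⟪x, a⟫ / ⟪a, a⟫) = 2 * (⟪a, x⟫ / ⟪a, a⟫) := by
    rw [real_inner_comm x a]; ring
  rw [hsc, two_smul]
  module

lemma phiJ_cone_pos (hα : LinearIndependent ℝ α) {K : Set ι} {x : E}
    (hx : x ∈ nnCone α K) : 0 ≤ phiJ hα x ∧ (phiJ hα x = 0 → x = 0) := by
  refine AddSubmonoid.closure_induction (fun y hy => ?_) (by simp)
    (fun y z _ _ hy hz => ?_) hx
  · obtain ⟨j, -, rfl⟩ := hy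
    rw [phiJ_apply hα]
    exact ⟨zero_le_one, fun h => absurd h one_ne_zero⟩
  · refine ⟨by rw [map_add]; linarith [hy.1, hz.1], fun h0 => ?_⟩
    rw [map_add] at h0
    have hy0 : phiJ hα y = 0 := by linarith [hy.1, hz.1]
    have hz0 : phiJ hα z = 0 := by linarith [hy.1, hz.1]
    rw [hy.2 hy0, hz.2 hz0, add_zero]

lemma extreme_of_unique_max {S : Set E} (ψ : E →ₗ[ℝ] ℝ) {x : E} (hx : x ∈ S)
    (hmax : ∀ y ∈ S, ψ y ≤ ψ x ∧ (ψ y = ψ x → y = x)) :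
    x ∈ Set.extremePoints ℝ (convexHull ℝ S) := by
  have hle : ∀ y ∈ convexHull ℝ S, ψ y ≤ ψ x := fun y hy =>
    convexHull_min (fun z hz => (hmax z hz).1) (convex_halfSpace_le ψ.isLinear (ψ x)) hy
  have huniq : ∀ y ∈ convexHull ℝ S, ψ y = ψ x → y = x := by
    intro y hy heq
    rw [convexHull_eq] at hy
    obtain ⟨ι', t, w, z, hw0, hw1, hz, hcm⟩ := hy
    rw [Finset.centerMass_eq_of_sum_1 _ _ hw1] at hcm
    have hψy : ∑ i ∈ t, w i * ψ (z i) = ψ x := by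
      rw [← heq, ← hcm, map_sum]
      exact Finset.sum_congr rfl (fun i _ => by rw [map_smul, smul_eq_mul])
    have hall : ∀ i ∈ t, 0 < w i → ψ (z i) = ψ x := by
      intro i₀ hi₀ hw₀
      by_contra hne
      have hlt : ψ (z i₀) < ψ x := lt_of_le_of_ne (hmax _ (hz i₀ hi₀)).1 hne
      have hstrict : ∑ i ∈ t, w i * ψ (z i) < ∑ i ∈ t, w i * ψ x := by
        refine Finset.sum_lt_sum (fun i hi => ?_) ⟨i₀, hi₀, ?_⟩
        · exact mul_le_mul_of_nonneg_left (hmax _ (hz i hi)).1 (hw0 i hi)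
        · exact (mul_lt_mul_iff_right₀ hw₀).2 hlt
      rw [← Finset.sum_mul, hw1, one_mul, hψy] at hstrict
      exact lt_irrefl _ hstrict
    have hzx : ∀ i ∈ t, w i • z i = w i • x := by
      intro i hi
      rcases eq_or_lt_of_le (hw0 i hi) with h0 | hpos
      · rw [← h0, zero_smul, zero_smul]
      · rw [(hmax _ (hz i hi)).2 (hall i hi hpos)]
    rw [← hcm, Finset.sum_congr rfl hzx, ← Finset.sum_smul, hw1, one_smul]
  refine ⟨subset_convexHull ℝ S hx, ?_⟩
  intro x₁ hx₁ x₂ hx₂ hseg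
  obtain ⟨a, b, ha, hb, hab, hxe⟩ := hseg
  have h1 : ψ x₁ ≤ ψ x := hle x₁ hx₁
  have h2 : ψ x₂ ≤ ψ x := hle x₂ hx₂
  have hsum : a * ψ x₁ + b * ψ x₂ = ψ x := by
    rw [← hxe, map_add, map_smul, map_smul, smul_eq_mul, smul_eq_mul]
  have hsum2 : a * ψ x + b * ψ x = ψ x := by rw [← add_mul, hab, one_mul]
  have he1 : ψ x₁ = ψ x := by
    by_contra hne
    have hlt : ψ x₁ < ψ x := lt_of_le_of_ne h1 hne
    linarith [mul_lt_mul_of_pos_left hlt ha, mul_le_mul_of_nonneg_left h2 hb.le]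
  have he2 : ψ x₂ = ψ x := by
    by_contra hne
    have hlt : ψ x₂ < ψ x := lt_of_le_of_ne h2 hne
    linarith [mul_lt_mul_of_pos_left hlt hb, mul_le_mul_of_nonneg_left h1 ha.le]
  exact huniq x₁ hx₁ he1

lemma extreme_image {S : Set E} (e : E ≃ₗ[ℝ] E) (hS : e '' S = S) {x : E}
    (hx : x ∈ Set.extremePoints ℝ (convexHull ℝ S)) :
    e x ∈ Set.extremePoints ℝ (convexHull ℝ S) := by
  have hconv : e '' convexHull ℝ S = convexHull ℝ S := by
    rw [show e '' convexHull ℝ S = (e : E →ₗ[ℝ] E) '' convexHull ℝ S from rfl,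
      LinearMap.image_convexHull]
    rw [show (e : E →ₗ[ℝ] E) '' S = e '' S from rfl, hS]
  refine ⟨by rw [← hconv]; exact ⟨x, hx.1, rfl⟩, ?_⟩
  intro x₁ hx₁ x₂ hx₂ hseg
  have h₁ : e.symm x₁ ∈ convexHull ℝ S := by
    rw [← hconv] at hx₁
    obtain ⟨y, hy, rfl⟩ := hx₁
    simpa using hy
  have h₂ : e.symm x₂ ∈ convexHull ℝ S := by
    rw [← hconv] at hx₂
    obtain ⟨y, hy, rfl⟩ := hx₂
    simpa using hy
  have hseg' : x ∈ openSegment ℝ (e.symm x₁) (e.symm x₂) := by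
    obtain ⟨a, b, ha, hb, hab, he⟩ := hseg
    refine ⟨a, b, ha, hb, hab, ?_⟩
    apply e.injective
    rw [map_add, map_smul, map_smul, e.apply_symm_apply, e.apply_symm_apply, he]
  have hh1 := hx.2 h₁ h₂ hseg'
  rw [← e.apply_symm_apply x₁, hh1]

end ConvexPart

section Module

variable {V : Type*} [AddCommGroup V] [Module ℂ V]
variable (lam : E) (wtSp : E → Submodule ℂ V) (F Ep : ι → V →ₗ[ℂ] V) (vlam : V)
  (κ : E → ι → ℂ)

/-- Span of the monomials of weight `lam - γ`. -/
def Mγ (al : ι → E) (lm : E) (Fo : ι → V →ₗ[ℂ] V) (vl : V) (γ : E) : Submodule ℂ V :=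
  span ℂ {m | ∃ l : List ι, wtL al l = γ ∧ m = monom Fo vl l}

lemma monom_mem (hHW : IsHWModule α lam wtSp F Ep vlam κ) (l : List ι) :
    monom F vlam l ∈ wtSp (lam - wtL α l) := by
  induction l with
  | nil => simpa [monom] using hHW.vlam_mem
  | cons i l ih =>
    have := hHW.F_wt i _ _ ih
    rw [show lam - wtL α l - α i = lam - wtL α (i :: l) by rw [wtL_cons]; abel] at this
    exact this

lemma Mγ_le (hHW : IsHWModule α lam wtSp F Ep vlam κ) (γ : E) :
    Mγ α lam F vlam γ ≤ wtSp (lam - γ) := by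
  refine span_le.2 ?_
  rintro m ⟨l, rfl, rfl⟩
  exact monom_mem lam wtSp F Ep vlam κ hHW l

lemma exists_list_of_ne_bot {γ : E} (h : Mγ α lam F vlam γ ≠ ⊥) :
    ∃ l : List ι, wtL α l = γ ∧ monom F vlam l ≠ 0 := by
  by_contra hc
  push_neg at hc
  refine h (span_eq_bot.2 ?_)
  rintro m ⟨l, hl, rfl⟩
  exact hc l hl

lemma kappa_ne (hα : LinearIndependent ℝ α)
    (hκ : ∀ (μ : E) (i : ι), κ μ i = ((2 * ⟪μ, α i⟫ / ⟪α i, α i⟫ : ℝ) : ℂ))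
    {μ ν : E} (hspan : μ - ν ∈ span ℝ (Set.range α)) (hne : μ ≠ ν) :
    ∃ i, κ ν i ≠ κ μ i := by
  obtain ⟨i, hi⟩ := sep hspan (sub_ne_zero.2 hne)
  refine ⟨i, fun h => hi ?_⟩
  rw [hκ, hκ, Complex.ofReal_inj] at h
  have hai : ⟪α i, α i⟫ ≠ 0 := fun h0 =>
    hα.ne_zero i ((inner_self_eq_zero (𝕜 := ℝ)).1 h0)
  field_simp at h
  rw [inner_sub_left]
  linarith

lemma wt_indep (hHW : IsHWModule α lam wtSp F Ep vlam κ) (μ' : E) (s : Finset E)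
    (hμ' : μ' ∈ s) :
    ∀ g : E → V, (∀ ν ∈ s, g ν ∈ wtSp ν) →
      (∀ ν ∈ s, ν ≠ μ' → ∃ i, κ ν i ≠ κ μ' i) → (∑ ν ∈ s, g ν = 0) → g μ' = 0 := by
  classical
  induction s using Finset.strongInduction with
  | _ s ih =>
    intro g hg hsep hsum
    by_cases hs : ∃ ν ∈ s, ν ≠ μ'
    · obtain ⟨ν₀, hν₀s, hν₀⟩ := hs
      obtain ⟨i₀, hi₀⟩ := hsep ν₀ hν₀s hν₀
      set Φ : V →ₗ[ℂ] V :=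
        (Ep i₀).comp (F i₀) - (F i₀).comp (Ep i₀) - κ ν₀ i₀ • LinearMap.id with hΦ
      have key : ∀ ν : E, ∀ w ∈ wtSp ν, Φ w = (κ ν i₀ - κ ν₀ i₀) • w := by
        intro ν w hw
        simp only [hΦ, LinearMap.sub_apply, LinearMap.comp_apply, LinearMap.smul_apply,
          LinearMap.id_apply]
        rw [hHW.sl2 i₀ ν w hw, sub_smul]
        abel
      have hlt : s.erase ν₀ ⊂ s := Finset.erase_ssubset hν₀s
      have hμ'e : μ' ∈ s.erase ν₀ := Finset.mem_erase.2 ⟨fun h => hν₀ h.symm, hμ'⟩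
      have hres := ih (s.erase ν₀) hlt hμ'e (fun ν => Φ (g ν))
        (fun ν hν => by
          show Φ (g ν) ∈ wtSp ν
          rw [key ν (g ν) (hg ν (Finset.mem_of_mem_erase hν))]
          exact Submodule.smul_mem _ _ (hg ν (Finset.mem_of_mem_erase hν)))
        (fun ν hν hne => hsep ν (Finset.mem_of_mem_erase hν) hne)
        (by
          have h1 : Φ (g ν₀) + ∑ ν ∈ s.erase ν₀, Φ (g ν) = 0 := by
            rw [Finset.add_sum_erase _ (fun ν => Φ (g ν)) hν₀s, ← map_sum, hsum, map_zero]
          rw [key ν₀ (g ν₀) (hg ν₀ hν₀s), sub_self, zero_smul, zero_add] at h1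
          exact h1)
      have hres2 : Φ (g μ') = 0 := hres
      rw [key μ' (g μ') (hg μ' hμ')] at hres2
      have hne0 : κ μ' i₀ - κ ν₀ i₀ ≠ 0 := sub_ne_zero.2 (fun h => hi₀ h.symm)
      exact (smul_eq_zero.1 hres2).resolve_left hne0
    · push_neg at hs
      have hseq : s = {μ'} := Finset.eq_singleton_iff_unique_mem.2
        ⟨hμ', fun x hx => hs x hx⟩
      rw [hseq, Finset.sum_singleton] at hsum
      exact hsum

lemma wtSp_le_Mγ (hHW : IsHWModule α lam wtSp F Ep vlam κ)
    (hα : LinearIndependent ℝ α)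
    (hκ : ∀ (μ : E) (i : ι), κ μ i = ((2 * ⟪μ, α i⟫ / ⟪α i, α i⟫ : ℝ) : ℂ))
    {μ : E} (hμ : lam - μ ∈ span ℝ (Set.range α)) :
    wtSp μ ≤ Mγ α lam F vlam (lam - μ) := by
  classical
  intro v hv
  have htop : v ∈ ⨆ γ : E, Mγ α lam F vlam γ := by
    have h1 : (⊤ : Submodule ℂ V) ≤ ⨆ γ : E, Mγ α lam F vlam γ := by
      rw [← hHW.gen]
      refine span_le.2 ?_
      rintro m ⟨l, rfl⟩
      exact le_iSup (fun γ => Mγ α lam F vlam γ) (wtL α l) (subset_span ⟨l, rfl, rfl⟩)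
    exact h1 Submodule.mem_top
  obtain ⟨f, hf, hsum⟩ := (Submodule.mem_iSup_iff_exists_finsupp _ _).1 htop
  have hS : ∑ γ ∈ f.support, f γ = v := hsum
  set t' : Finset E := insert (lam - μ) f.support with ht'
  set h : E → V := fun γ => f γ - (if γ = lam - μ then v else 0) with hh
  have hft' : ∑ γ ∈ t', f γ = v := by
    by_cases hmem : (lam - μ) ∈ f.support
    · rw [ht', Finset.insert_eq_self.2 hmem, hS]
    · rw [ht', Finset.sum_insert hmem, Finsupp.notMem_support_iff.1 hmem, zero_add, hS]
  have hsum0 : ∑ γ ∈ t', h γ = 0 := by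
    simp only [hh]
    rw [Finset.sum_sub_distrib, hft', Finset.sum_ite_eq' t' (lam - μ) (fun _ => v),
      if_pos (Finset.mem_insert_self _ _), sub_self]
  have hinj : ∀ x ∈ t', ∀ y ∈ t', lam - x = lam - y → x = y := by
    intro x _ y _ hxy
    exact sub_right_injective hxy
  have hres := wt_indep lam wtSp F Ep vlam κ hHW μ (t'.image (fun γ => lam - γ))
    (Finset.mem_image.2 ⟨lam - μ, Finset.mem_insert_self _ _, by rw [sub_sub_cancel]⟩)
    (fun ν => h (lam - ν))
    ?hg ?hsep ?hsum2
  case hg =>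
    rintro ν hν
    obtain ⟨γ, hγ, rfl⟩ := Finset.mem_image.1 hν
    show h (lam - (lam - γ)) ∈ wtSp (lam - γ)
    rw [sub_sub_cancel, hh]
    refine Submodule.sub_mem _ (Mγ_le lam wtSp F Ep vlam κ hHW γ (hf γ)) ?_
    by_cases hc : γ = lam - μ
    · rw [if_pos hc, hc, sub_sub_cancel]; exact hv
    · rw [if_neg hc]; exact Submodule.zero_mem _
  case hsep =>
    rintro ν hν hne
    obtain ⟨γ, hγ, rfl⟩ := Finset.mem_image.1 hν
    have hγne : γ ≠ lam - μ := fun hc => hne (by rw [hc, sub_sub_cancel])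
    have hγsupp : γ ∈ f.support := by
      rcases Finset.mem_insert.1 hγ with hc | hc
      · exact absurd hc hγne
      · exact hc
    have hMne : Mγ α lam F vlam γ ≠ ⊥ := by
      intro hb
      have := hf γ
      rw [hb, Submodule.mem_bot] at this
      exact Finsupp.mem_support_iff.1 hγsupp this
    obtain ⟨l, hl, -⟩ := exists_list_of_ne_bot lam F vlam hMne
    have hγspan : γ ∈ span ℝ (Set.range α) := hl ▸ wtL_mem_span α l
    have hspan2 : μ - (lam - γ) ∈ span ℝ (Set.range α) := by
      have := sub_mem hγspan hμ
      rw [show γ - (lam - μ) = μ - (lam - γ) by abel] at this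
      exact this
    exact kappa_ne κ hα hκ hspan2 (fun hc => hne hc.symm)
  case hsum2 =>
    rw [Finset.sum_image hinj]
    simp only [sub_sub_cancel]
    exact hsum0
  have hres2 : f (lam - μ) - (if lam - μ = lam - μ then v else 0) = 0 := hres
  rw [if_pos rfl] at hres2
  have hveq : v = f (lam - μ) := (sub_eq_zero.1 hres2).symm
  rw [hveq]
  exact hf (lam - μ)


section Sl2

lemma kappa_shift (hα : LinearIndependent ℝ α)
    (hκ : ∀ (μ : E) (i : ι), κ μ i = ((2 * ⟪μ, α i⟫ / ⟪α i, α i⟫ : ℝ) : ℂ))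
    (μ : E) (i : ι) (r : ℝ) : κ (μ + r • α i) i = κ μ i + 2 * (r : ℂ) := by
  have hai : ⟪α i, α i⟫ ≠ 0 := fun h0 =>
    hα.ne_zero i ((inner_self_eq_zero (𝕜 := ℝ)).1 h0)
  have hre : (2 * ⟪μ + r • α i, α i⟫ / ⟪α i, α i⟫ : ℝ)
      = 2 * ⟪μ, α i⟫ / ⟪α i, α i⟫ + 2 * r := by
    rw [inner_add_left, real_inner_smul_left]
    field_simp
  rw [hκ, hκ, hre]
  push_cast
  ring

lemma Fpow_mem (hHW : IsHWModule α lam wtSp F Ep vlam κ) {μ : E} {v : V}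
    (hv : v ∈ wtSp μ) (i : ι) (k : ℕ) :
    (F i ^ k) v ∈ wtSp (μ - (k : ℝ) • α i) := by
  induction k with
  | zero => simpa using hv
  | succ k ih =>
    have h2 := hHW.F_wt i _ _ ih
    rw [pow_succ', Module.End.mul_apply]
    rw [show μ - (k : ℝ) • α i - α i = μ - ((k + 1 : ℕ) : ℝ) • α i by
      push_cast; rw [add_smul, one_smul]; abel] at h2
    exact h2

lemma Epow_mem (hHW : IsHWModule α lam wtSp F Ep vlam κ) {μ : E} {v : V}
    (hv : v ∈ wtSp μ) (i : ι) (k : ℕ) :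
    (Ep i ^ k) v ∈ wtSp (μ + (k : ℝ) • α i) := by
  induction k with
  | zero => simpa using hv
  | succ k ih =>
    have h2 := hHW.E_wt i _ _ ih
    rw [pow_succ', Module.End.mul_apply]
    rw [show μ + (k : ℝ) • α i + α i = μ + ((k + 1 : ℕ) : ℝ) • α i by
      push_cast; rw [add_smul, one_smul]; abel] at h2
    exact h2

lemma EFpow (hHW : IsHWModule α lam wtSp F Ep vlam κ) (hα : LinearIndependent ℝ α)
    (hκ : ∀ (μ : E) (i : ι), κ μ i = ((2 * ⟪μ, α i⟫ / ⟪α i, α i⟫ : ℝ) : ℂ))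
    {ν : E} {u : V} {i : ι} (hu : u ∈ wtSp ν) (hE : Ep i u = 0) (k : ℕ) :
    Ep i ((F i ^ (k + 1)) u) = (((k : ℂ) + 1) * (κ ν i - (k : ℂ))) • ((F i ^ k) u) := by
  induction k with
  | zero =>
    rw [pow_one, hHW.sl2 i ν u hu, hE, map_zero, zero_add, pow_zero, Module.End.one_apply]
    norm_num
  | succ k ih =>
    have hw : (F i ^ (k + 1)) u ∈ wtSp (ν - ((k + 1 : ℕ) : ℝ) • α i) :=
      Fpow_mem lam wtSp F Ep vlam κ hHW hu i (k + 1)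
    have hκw : κ (ν - ((k + 1 : ℕ) : ℝ) • α i) i = κ ν i - 2 * ((k : ℂ) + 1) := by
      have := kappa_shift κ hα hκ ν i (-((k + 1 : ℕ) : ℝ))
      rw [show ν + (-((k + 1 : ℕ) : ℝ)) • α i = ν - ((k + 1 : ℕ) : ℝ) • α i by
        rw [neg_smul]; abel] at this
      rw [this]
      push_cast
      ring
    rw [show k + 1 + 1 = (k + 1) + 1 from rfl, pow_succ' (F i) (k + 1), Module.End.mul_apply,
      hHW.sl2 i _ _ hw, hκw, ih, map_smul]
    rw [show F i ((F i ^ k) u) = (F i ^ (k + 1)) u by rw [pow_succ', Module.End.mul_apply]]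
    rw [← add_smul]
    congr 1
    push_cast
    ring

lemma FEpow (hHW : IsHWModule α lam wtSp F Ep vlam κ) (hα : LinearIndependent ℝ α)
    (hκ : ∀ (μ : E) (i : ι), κ μ i = ((2 * ⟪μ, α i⟫ / ⟪α i, α i⟫ : ℝ) : ℂ))
    {ν : E} {u : V} {i : ι} (hu : u ∈ wtSp ν) (hF : F i u = 0) (k : ℕ) :
    F i ((Ep i ^ (k + 1)) u) = (((k : ℂ) + 1) * (-(κ ν i) - (k : ℂ))) • ((Ep i ^ k) u) := by
  induction k with
  | zero =>
    have h0 := hHW.sl2 i ν u hu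
    rw [hF, map_zero] at h0
    have h1 : F i (Ep i u) = -(κ ν i) • u := by
      rw [neg_smul]; exact eq_neg_of_add_eq_zero_left h0.symm
    rw [pow_one, h1, pow_zero, Module.End.one_apply]
    norm_num
  | succ k ih =>
    have hw : (Ep i ^ (k + 1)) u ∈ wtSp (ν + ((k + 1 : ℕ) : ℝ) • α i) :=
      Epow_mem lam wtSp F Ep vlam κ hHW hu i (k + 1)
    have hκw : κ (ν + ((k + 1 : ℕ) : ℝ) • α i) i = κ ν i + 2 * ((k : ℂ) + 1) := by
      have := kappa_shift κ hα hκ ν i ((k + 1 : ℕ) : ℝ)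
      rw [this]
      push_cast
      ring
    have hsl2 := hHW.sl2 i _ _ hw
    -- Ep i (F i w) = F i (Ep i w) + κ w • w  where w = (Ep i^(k+1)) u
    have hEw : Ep i ((Ep i ^ (k + 1)) u) = (Ep i ^ (k + 2)) u := by
      rw [pow_succ' (Ep i) (k + 1), Module.End.mul_apply]
    have hFw : F i ((Ep i ^ (k + 1)) u) = (((k : ℂ) + 1) * (-(κ ν i) - (k : ℂ))) • ((Ep i ^ k) u) := ih
    have h2 : F i ((Ep i ^ (k + 2)) u)
        = Ep i (F i ((Ep i ^ (k + 1)) u)) - κ (ν + ((k + 1 : ℕ) : ℝ) • α i) i • ((Ep i ^ (k + 1)) u) := by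
      rw [← hEw, hsl2]
      abel
    rw [show k + 1 + 1 = k + 2 from rfl, h2, hFw, map_smul, hκw]
    rw [show Ep i ((Ep i ^ k) u) = (Ep i ^ (k + 1)) u by rw [pow_succ', Module.End.mul_apply]]
    rw [← sub_smul]
    congr 1
    push_cast
    ring

lemma prim_down (hHW : IsHWModule α lam wtSp F Ep vlam κ) (hα : LinearIndependent ℝ α)
    (hκ : ∀ (μ : E) (i : ι), κ μ i = ((2 * ⟪μ, α i⟫ / ⟪α i, α i⟫ : ℝ) : ℂ))
    {ν : E} {u : V} {i : ι} (hu : u ∈ wtSp ν) (hune : u ≠ 0) (hE : Ep i u = 0)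
    (hnil : ∃ k, (F i ^ k) u = 0) :
    ∃ q : ℕ, κ ν i = (q : ℂ) ∧ ∀ k ≤ q, (F i ^ k) u ≠ 0 := by
  classical
  have h0 : Nat.find hnil ≠ 0 := by
    intro h
    have := Nat.find_spec hnil
    rw [h, pow_zero, Module.End.one_apply] at this
    exact hune this
  set q : ℕ := Nat.find hnil - 1 with hqdef
  have hq1 : q + 1 = Nat.find hnil := Nat.succ_pred_eq_of_pos (Nat.pos_of_ne_zero h0)
  have hzero : (F i ^ (q + 1)) u = 0 := by rw [hq1]; exact Nat.find_spec hnil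
  have hne : ∀ k ≤ q, (F i ^ k) u ≠ 0 := fun k hk =>
    Nat.find_min hnil (by omega)
  refine ⟨q, ?_, hne⟩
  have heq := EFpow lam wtSp F Ep vlam κ hHW hα hκ hu hE q
  rw [hzero, map_zero] at heq
  have := (smul_eq_zero.1 heq.symm).resolve_right (hne q le_rfl)
  rcases mul_eq_zero.1 this with h | h
  · exact absurd h (Nat.cast_add_one_ne_zero q)
  · linear_combination h

lemma prim_up (hHW : IsHWModule α lam wtSp F Ep vlam κ) (hα : LinearIndependent ℝ α)
    (hκ : ∀ (μ : E) (i : ι), κ μ i = ((2 * ⟪μ, α i⟫ / ⟪α i, α i⟫ : ℝ) : ℂ))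
    {ν : E} {u : V} {i : ι} (hu : u ∈ wtSp ν) (hune : u ≠ 0) (hF : F i u = 0)
    (hnil : ∃ k, (Ep i ^ k) u = 0) :
    ∃ q : ℕ, κ ν i = -(q : ℂ) ∧ ∀ k ≤ q, (Ep i ^ k) u ≠ 0 := by
  classical
  have h0 : Nat.find hnil ≠ 0 := by
    intro h
    have := Nat.find_spec hnil
    rw [h, pow_zero, Module.End.one_apply] at this
    exact hune this
  set q : ℕ := Nat.find hnil - 1 with hqdef
  have hq1 : q + 1 = Nat.find hnil := Nat.succ_pred_eq_of_pos (Nat.pos_of_ne_zero h0)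
  have hzero : (Ep i ^ (q + 1)) u = 0 := by rw [hq1]; exact Nat.find_spec hnil
  have hne : ∀ k ≤ q, (Ep i ^ k) u ≠ 0 := fun k hk =>
    Nat.find_min hnil (by omega)
  refine ⟨q, ?_, hne⟩
  have heq := FEpow lam wtSp F Ep vlam κ hHW hα hκ hu hF q
  rw [hzero, map_zero] at heq
  have := (smul_eq_zero.1 heq.symm).resolve_right (hne q le_rfl)
  rcases mul_eq_zero.1 this with h | h
  · exact absurd h (Nat.cast_add_one_ne_zero q)
  · linear_combination -h

end Sl2


section StringSec
variable (J : Set ι)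

lemma Fnilp (hHW : IsHWModule α lam wtSp F Ep vlam κ) (hα : LinearIndependent ℝ α)
    (hfin : (wtJ α lam (wtSet wtSp) J).Finite)
    {i : ι} (hi : i ∈ J) {μ : E} (hc : lam - μ ∈ nnCone α J) {v : V} (hv : v ∈ wtSp μ) :
    ∃ k, (F i ^ k) v = 0 := by
  by_contra h
  push_neg at h
  have hinj : Function.Injective (fun k : ℕ => μ - (k : ℝ) • α i) := by
    intro a b hab
    simp only at hab
    have h1 : ((a : ℝ) - b) • α i = 0 := by
      rw [sub_smul, sub_right_injective hab, sub_self]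
    rcases smul_eq_zero.1 h1 with h2 | h2
    · have h3 : (a : ℝ) = b := by linarith [sub_eq_zero.1 (by linarith [h2] : (a:ℝ) - b = 0)]
      exact_mod_cast h3
    · exact absurd h2 (hα.ne_zero i)
  refine hfin.not_infinite (Set.infinite_of_injective_forall_mem hinj (fun k => ?_))
  refine ⟨?_, ?_⟩
  · exact (Submodule.ne_bot_iff _).2
      ⟨(F i ^ k) v, Fpow_mem lam wtSp F Ep vlam κ hHW hv i k, h k⟩
  · rw [show lam - (μ - (k : ℝ) • α i) = (lam - μ) + (k : ℝ) • α i by abel]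
    refine add_mem hc ?_
    rw [Nat.cast_smul_eq_nsmul]
    exact AddSubmonoid.nsmul_mem (nnCone α J) (AddSubmonoid.subset_closure ⟨i, hi, rfl⟩) k

lemma Enilp (hHW : IsHWModule α lam wtSp F Ep vlam κ) (hα : LinearIndependent ℝ α)
    (hκ : ∀ (μ : E) (i : ι), κ μ i = ((2 * ⟪μ, α i⟫ / ⟪α i, α i⟫ : ℝ) : ℂ))
    {i : ι} (hi : i ∈ J) {μ : E} (hc : lam - μ ∈ nnCone α J) {v : V} (hv : v ∈ wtSp μ) :
    ∃ k, (Ep i ^ k) v = 0 := by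
  obtain ⟨n, hn⟩ := exists_nat_coord hα hc i
  refine ⟨n + 1, ?_⟩
  have hspan : lam - (μ + ((n + 1 : ℕ) : ℝ) • α i) ∈ span ℝ (Set.range α) := by
    rw [show lam - (μ + ((n + 1 : ℕ) : ℝ) • α i) = (lam - μ) - ((n + 1 : ℕ) : ℝ) • α i by abel]
    exact sub_mem (nnCone_le_span α J _ hc) (Submodule.smul_mem _ _ (subset_span ⟨i, rfl⟩))
  have hbot : wtSp (μ + ((n + 1 : ℕ) : ℝ) • α i) = ⊥ := by
    by_contra hne
    have hle := wtSp_le_Mγ lam wtSp F Ep vlam κ hHW hα hκ hspan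
    have hMne : Mγ α lam F vlam (lam - (μ + ((n + 1 : ℕ) : ℝ) • α i)) ≠ ⊥ := by
      intro hb
      exact hne (le_bot_iff.1 (hb ▸ hle))
    obtain ⟨l, hl, -⟩ := exists_list_of_ne_bot lam F vlam hMne
    have h1 : coordφ hα i (wtL α l) = coordφ hα i (lam - μ) - ((n + 1 : ℕ) : ℝ) := by
      rw [hl, show lam - (μ + ((n + 1 : ℕ) : ℝ) • α i) = (lam - μ) - ((n + 1 : ℕ) : ℝ) • α i
        by abel, map_sub, map_smul, coordφ_self hα, smul_eq_mul, mul_one]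
    have h2 : (0 : ℝ) ≤ coordφ hα i (wtL α l) := coord_nonneg hα (wtL_mem_cone α l) i
    rw [h1, hn] at h2
    push_cast at h2
    linarith
  have hmem := Epow_mem lam wtSp F Ep vlam κ hHW hv i (n + 1)
  rw [hbot, Submodule.mem_bot] at hmem
  exact hmem

lemma mem_wtJ_of (hHW : IsHWModule α lam wtSp F Ep vlam κ) (hα : LinearIndependent ℝ α)
    (hκ : ∀ (μ : E) (i : ι), κ μ i = ((2 * ⟪μ, α i⟫ / ⟪α i, α i⟫ : ℝ) : ℂ))
    {μ' : E} (hw : wtSp μ' ≠ ⊥) (hspan : lam - μ' ∈ span ℝ (Set.range α))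
    (hsupp : ∀ j, j ∉ J → coordφ hα j (lam - μ') = 0) :
    μ' ∈ wtJ α lam (wtSet wtSp) J := by
  refine ⟨hw, ?_⟩
  have hle := wtSp_le_Mγ lam wtSp F Ep vlam κ hHW hα hκ hspan
  have hMne : Mγ α lam F vlam (lam - μ') ≠ ⊥ := fun hb => hw (le_bot_iff.1 (hb ▸ hle))
  obtain ⟨l, hl, -⟩ := exists_list_of_ne_bot lam F vlam hMne
  refine mem_nnCone_of hα hspan (fun j => ?_) hsupp
  rw [← hl]
  exact exists_nat_coord hα (wtL_mem_cone α l) j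

lemma coordsupp (hα : LinearIndependent ℝ α) {μ : E} (hc : lam - μ ∈ nnCone α J)
    {i : ι} (hi : i ∈ J) (r : ℝ) {j : ι} (hj : j ∉ J) :
    coordφ hα j (lam - (μ - r • α i)) = 0 := by
  rw [show lam - (μ - r • α i) = (lam - μ) + r • α i by abel, map_add, map_smul,
    coord_eq_zero hα hc hj, coordφ_ne hα (fun he => hj (by rw [he]; exact hi)),
    smul_zero, add_zero]

lemma string (hHW : IsHWModule α lam wtSp F Ep vlam κ) (hα : LinearIndependent ℝ α)
    (hκ : ∀ (μ : E) (i : ι), κ μ i = ((2 * ⟪μ, α i⟫ / ⟪α i, α i⟫ : ℝ) : ℂ))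
    (hfin : (wtJ α lam (wtSet wtSp) J).Finite)
    {μ : E} (hw : wtSp μ ≠ ⊥) (hc : lam - μ ∈ nnCone α J) {i : ι} (hi : i ∈ J) :
    ∃ m : ℤ, κ μ i = ((m : ℝ) : ℂ) ∧ ∀ k : ℤ, min 0 m ≤ k → k ≤ max 0 m →
      μ - (k : ℝ) • α i ∈ wtJ α lam (wtSet wtSp) J := by
  classical
  obtain ⟨v, hv, hvne⟩ := (Submodule.ne_bot_iff _).1 hw
  -- upward primitive vector
  have hEn : ∃ k, (Ep i ^ k) v = 0 := Enilp lam wtSp F Ep vlam κ J hHW hα hκ hi hc hv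
  have hk₀0 : Nat.find hEn ≠ 0 := by
    intro h
    have hsp := Nat.find_spec hEn
    rw [h, pow_zero, Module.End.one_apply] at hsp
    exact hvne hsp
  set p : ℕ := Nat.find hEn - 1 with hpdef
  have hp1 : p + 1 = Nat.find hEn := Nat.succ_pred_eq_of_pos (Nat.pos_of_ne_zero hk₀0)
  have hup_ne : (Ep i ^ p) v ≠ 0 := Nat.find_min hEn (by omega)
  have hu : (Ep i ^ p) v ∈ wtSp (μ + (p : ℝ) • α i) :=
    Epow_mem lam wtSp F Ep vlam κ hHW hv i p
  have hEu : Ep i ((Ep i ^ p) v) = 0 := by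
    have hsp : (Ep i ^ (p + 1)) v = 0 := by rw [hp1]; exact Nat.find_spec hEn
    rw [pow_succ', Module.End.mul_apply] at hsp
    exact hsp
  have hνw : wtSp (μ + (p : ℝ) • α i) ≠ ⊥ := (Submodule.ne_bot_iff _).2 ⟨_, hu, hup_ne⟩
  have hνJ : μ + (p : ℝ) • α i ∈ wtJ α lam (wtSet wtSp) J := by
    refine mem_wtJ_of lam wtSp F Ep vlam κ J hHW hα hκ hνw ?_ (fun j hj => ?_)
    · rw [show lam - (μ + (p : ℝ) • α i) = (lam - μ) - (p : ℝ) • α i by abel]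
      exact sub_mem (nnCone_le_span α J _ hc) (Submodule.smul_mem _ _ (subset_span ⟨i, rfl⟩))
    · rw [show μ + (p : ℝ) • α i = μ - (-(p : ℝ)) • α i by rw [neg_smul]; abel]
      exact coordsupp lam J hα hc hi _ hj
  have hcν : lam - (μ + (p : ℝ) • α i) ∈ nnCone α J := hνJ.2
  obtain ⟨q, hq, hqne⟩ := prim_down lam wtSp F Ep vlam κ hHW hα hκ hu hup_ne hEu
    (Fnilp lam wtSp F Ep vlam κ J hHW hα hfin hi hcν hu)
  -- downward primitive vector
  have hFn : ∃ k, (F i ^ k) v = 0 := Fnilp lam wtSp F Ep vlam κ J hHW hα hfin hi hc hv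
  have hk₁0 : Nat.find hFn ≠ 0 := by
    intro h
    have hsp := Nat.find_spec hFn
    rw [h, pow_zero, Module.End.one_apply] at hsp
    exact hvne hsp
  set b : ℕ := Nat.find hFn - 1 with hbdef
  have hb1 : b + 1 = Nat.find hFn := Nat.succ_pred_eq_of_pos (Nat.pos_of_ne_zero hk₁0)
  have hdn_ne : (F i ^ b) v ≠ 0 := Nat.find_min hFn (by omega)
  have hu' : (F i ^ b) v ∈ wtSp (μ - (b : ℝ) • α i) :=
    Fpow_mem lam wtSp F Ep vlam κ hHW hv i b
  have hFu' : F i ((F i ^ b) v) = 0 := by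
    have hsp : (F i ^ (b + 1)) v = 0 := by rw [hb1]; exact Nat.find_spec hFn
    rw [pow_succ', Module.End.mul_apply] at hsp
    exact hsp
  have hcν' : lam - (μ - (b : ℝ) • α i) ∈ nnCone α J := by
    rw [show lam - (μ - (b : ℝ) • α i) = (lam - μ) + (b : ℝ) • α i by abel]
    refine add_mem hc ?_
    rw [Nat.cast_smul_eq_nsmul]
    exact AddSubmonoid.nsmul_mem (nnCone α J) (AddSubmonoid.subset_closure ⟨i, hi, rfl⟩) b
  obtain ⟨q', hq', hq'ne⟩ := prim_up lam wtSp F Ep vlam κ hHW hα hκ hu' hdn_ne hFu'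
    (Enilp lam wtSp F Ep vlam κ J hHW hα hκ hi hcν' hu')
  -- κ μ i = q - 2p = 2b - q'
  have hm1 : κ μ i = (q : ℂ) - 2 * (p : ℂ) := by
    have hs := kappa_shift κ hα hκ μ i (p : ℝ)
    rw [hq] at hs
    push_cast at hs ⊢
    linear_combination -hs
  have hm2 : κ μ i = 2 * (b : ℂ) - (q' : ℂ) := by
    have hs := kappa_shift κ hα hκ μ i (-(b : ℝ))
    rw [show μ + (-(b : ℝ)) • α i = μ - (b : ℝ) • α i by rw [neg_smul]; abel, hq'] at hs
    push_cast at hs ⊢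
    linear_combination -hs
  have hqq' : (q : ℤ) - 2 * (p : ℤ) = 2 * (b : ℤ) - (q' : ℤ) := by
    have hC : (((q : ℤ) - 2 * (p : ℤ) : ℤ) : ℂ) = (((2 * (b : ℤ) - (q' : ℤ) : ℤ)) : ℂ) := by
      push_cast
      linear_combination hm1.symm.trans hm2
    exact_mod_cast hC
  refine ⟨(q : ℤ) - 2 * (p : ℤ), ?_, ?_⟩
  · rw [hm1]; push_cast; ring
  · intro k hk1 hk2
    by_cases hpq : (p : ℤ) ≤ q
    · have hb1' : 0 ≤ k + (p : ℤ) := by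
        rcases min_cases (0 : ℤ) ((q : ℤ) - 2 * (p : ℤ)) with ⟨h1, h2⟩ | ⟨h1, h2⟩ <;>
          rw [h1] at hk1 <;> omega
      have hb2' : k + (p : ℤ) ≤ q := by
        rcases max_cases (0 : ℤ) ((q : ℤ) - 2 * (p : ℤ)) with ⟨h1, h2⟩ | ⟨h1, h2⟩ <;>
          rw [h1] at hk2 <;> omega
      set k' : ℕ := (k + (p : ℤ)).toNat with hk'def
      have hk'le : k' ≤ q := by omega
      have hcast : ((k' : ℕ) : ℝ) = (k : ℝ) + (p : ℝ) := by
        have hZ : ((k' : ℕ) : ℤ) = k + (p : ℤ) := Int.toNat_of_nonneg hb1'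
        exact_mod_cast congrArg (Int.cast : ℤ → ℝ) hZ
      have hwteq : μ + (p : ℝ) • α i - ((k' : ℕ) : ℝ) • α i = μ - (k : ℝ) • α i := by
        rw [hcast, add_smul]; abel
      have hel := Fpow_mem lam wtSp F Ep vlam κ hHW hu i k'
      rw [hwteq] at hel
      have hwne : wtSp (μ - (k : ℝ) • α i) ≠ ⊥ :=
        (Submodule.ne_bot_iff _).2 ⟨_, hel, hqne k' hk'le⟩
      refine mem_wtJ_of lam wtSp F Ep vlam κ J hHW hα hκ hwne ?_
        (fun j hj => coordsupp lam J hα hc hi _ hj)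
      rw [show lam - (μ - (k : ℝ) • α i) = (lam - μ) + (k : ℝ) • α i by abel]
      exact add_mem (nnCone_le_span α J _ hc) (Submodule.smul_mem _ _ (subset_span ⟨i, rfl⟩))
    · have hbq' : (b : ℤ) ≤ q' := by omega
      have hb1' : 0 ≤ (b : ℤ) - k := by
        rcases max_cases (0 : ℤ) ((q : ℤ) - 2 * (p : ℤ)) with ⟨h1, h2⟩ | ⟨h1, h2⟩ <;>
          rw [h1] at hk2 <;> omega
      have hb2' : (b : ℤ) - k ≤ q' := by
        rcases min_cases (0 : ℤ) ((q : ℤ) - 2 * (p : ℤ)) with ⟨h1, h2⟩ | ⟨h1, h2⟩ <;>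
          rw [h1] at hk1 <;> omega
      set k'' : ℕ := ((b : ℤ) - k).toNat with hk''def
      have hk''le : k'' ≤ q' := by omega
      have hcast : ((k'' : ℕ) : ℝ) = (b : ℝ) - (k : ℝ) := by
        have hZ : ((k'' : ℕ) : ℤ) = (b : ℤ) - k := Int.toNat_of_nonneg hb1'
        exact_mod_cast congrArg (Int.cast : ℤ → ℝ) hZ
      have hwteq : μ - (b : ℝ) • α i + ((k'' : ℕ) : ℝ) • α i = μ - (k : ℝ) • α i := by
        rw [hcast, sub_smul]; abel
      have hel := Epow_mem lam wtSp F Ep vlam κ hHW hu' i k''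
      rw [hwteq] at hel
      have hwne : wtSp (μ - (k : ℝ) • α i) ≠ ⊥ :=
        (Submodule.ne_bot_iff _).2 ⟨_, hel, hq'ne k'' hk''le⟩
      refine mem_wtJ_of lam wtSp F Ep vlam κ J hHW hα hκ hwne ?_
        (fun j hj => coordsupp lam J hα hc hi _ hj)
      rw [show lam - (μ - (k : ℝ) • α i) = (lam - μ) + (k : ℝ) • α i by abel]
      exact add_mem (nnCone_le_span α J _ hc) (Submodule.smul_mem _ _ (subset_span ⟨i, rfl⟩))

end StringSec

end Module

end VWJAux

open VWJAux

/-- for `J ⊆ J(V^λ)`, the vertices (extreme points) of the convex polytope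
`conv_ℝ(wt_J V^λ)` are precisely the Weyl orbit `W_J(λ)`. -/
theorem vertices_of_wtJ {ι E V : Type*} [NormedAddCommGroup E] [InnerProductSpace ℝ E]
    [FiniteDimensional ℝ E] [AddCommGroup V] [Module ℂ V]
    (α : ι → E) (lam : E) (wtSp : E → Submodule ℂ V) (F Ep : ι → V →ₗ[ℂ] V)
    (vlam : V) (κ : E → ι → ℂ)
    (hα : LinearIndependent ℝ α)
    (hκ : ∀ (μ : E) (i : ι), κ μ i = ((2 * ⟪μ, α i⟫ / ⟪α i, α i⟫ : ℝ) : ℂ))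
    (hHW : IsHWModule α lam wtSp F Ep vlam κ)
    (J : Set ι) (hJ : J ⊆ integrable F vlam κ lam)
    (hfin : (wtJ α lam (wtSet wtSp) J).Finite) :
    Set.extremePoints ℝ (convexHull ℝ (wtJ α lam (wtSet wtSp) J)) = weylOrbit α J lam := by
  classical
  set S : Set E := wtJ α lam (wtSet wtSp) J with hSdef
  have hlamS : lam ∈ S :=
    ⟨(Submodule.ne_bot_iff _).2 ⟨vlam, hHW.vlam_mem, hHW.vlam_ne⟩,
      by rw [sub_self]; exact zero_mem _⟩
  -- stability under simple reflections
  have hrefl : ∀ i ∈ J, ∀ μ ∈ S, sRefl (α i) μ ∈ S := by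
    intro i hi μ hμ
    obtain ⟨m, hm, hstr⟩ := string lam wtSp F Ep vlam κ J hHW hα hκ hfin hμ.1 hμ.2 hi
    have hmem := hstr m (min_le_right 0 m) (le_max_right 0 m)
    have hreal : (2 * ⟪μ, α i⟫ / ⟪α i, α i⟫ : ℝ) = (m : ℝ) := by
      have h1 := (hκ μ i).symm.trans hm
      exact_mod_cast h1
    rw [sRefl_apply (hα.ne_zero i) μ, hreal]
    exact hmem
  -- stability under the Weyl group
  have hwstab : ∀ w ∈ weylGrp α J, ∀ μ ∈ S, w μ ∈ S := by
    intro w hw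
    refine Subgroup.closure_induction (fun g hgk => ?_) (fun μ hμ => ?_)
      (fun g h _ _ ihg ihh μ hμ => ?_) (fun g _ ihg μ hμ => ?_) hw
    · rintro μ hμ
      obtain ⟨i, hi, rfl⟩ := hgk
      exact hrefl i hi μ hμ
    · simpa using hμ
    · rw [show (g * h) μ = g (h μ) from rfl]
      exact ihg _ (ihh _ hμ)
    · have himg : (fun y => g y) '' S = S := by
        refine Set.eq_of_subset_of_ncard_le ?_ ?_ hfin
        · rintro y ⟨ν, hν, rfl⟩; exact ihg ν hν
        · rw [Set.ncard_image_of_injective S g.injective]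
      have hμ' : μ ∈ (fun y => g y) '' S := by rw [himg]; exact hμ
      obtain ⟨ν, hν, hgν⟩ := hμ'
      have hcoe : (g⁻¹ : E ≃ₗᵢ[ℝ] E) μ = g.symm μ := by
        rw [LinearIsometryEquiv.coe_inv]
      rw [hcoe, ← hgν, g.symm_apply_apply]
      exact hν
  -- image of S under Weyl group elements
  have himgS : ∀ w ∈ weylGrp α J, (fun y => w y) '' S = S := by
    intro w hw
    refine Set.eq_of_subset_of_ncard_le ?_ ?_ hfin
    · rintro y ⟨ν, hν, rfl⟩; exact hwstab w hw ν hν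
    · rw [Set.ncard_image_of_injective S w.injective]
  -- lam is the unique maximizer of phiJ on S
  have hmax : ∀ μ ∈ S, phiJ hα μ ≤ phiJ hα lam ∧ (phiJ hα μ = phiJ hα lam → μ = lam) := by
    intro μ hμ
    have hpos := phiJ_cone_pos hα hμ.2
    have hphi : phiJ hα μ = phiJ hα lam - phiJ hα (lam - μ) := by rw [map_sub]; ring
    constructor
    · rw [hphi]; linarith [hpos.1]
    · intro he
      rw [hphi] at he
      have h0 : phiJ hα (lam - μ) = 0 := by linarith
      exact (sub_eq_zero.1 (hpos.2 h0)).symm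
  -- ⊇ direction
  have hdir2 : weylOrbit α J lam ⊆ Set.extremePoints ℝ (convexHull ℝ S) := by
    rintro x ⟨w, hw, rfl⟩
    set ψ : E →ₗ[ℝ] ℝ := (phiJ hα).comp (w.symm.toLinearEquiv : E →ₗ[ℝ] E) with hψ
    refine extreme_of_unique_max ψ (hwstab w hw lam hlamS) ?_
    intro y hy
    have hy' : w.symm y ∈ S := by
      have hinv := hwstab w⁻¹ (inv_mem hw) y hy
      rwa [LinearIsometryEquiv.coe_inv] at hinv
    have hψy : ψ y = phiJ hα (w.symm y) := rfl
    have hψx : ψ (w lam) = phiJ hα lam := by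
      show phiJ hα (w.symm (w lam)) = phiJ hα lam
      rw [w.symm_apply_apply]
    rw [hψy, hψx]
    refine ⟨(hmax _ hy').1, fun he => ?_⟩
    have hylam := (hmax _ hy').2 he
    show y = w lam
    rw [← hylam, w.apply_symm_apply]
  -- ⊆ direction
  have hdir1 : Set.extremePoints ℝ (convexHull ℝ S) ⊆ weylOrbit α J lam := by
    intro x hx
    have hxS : x ∈ S := extremePoints_convexHull_subset hx
    set O : Set E := {ν | ν ∈ S ∧ ∃ w ∈ weylGrp α J, ν = w x} with hO
    have hOfin : O.Finite := hfin.subset (fun ν hν => hν.1)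
    have hOne : O.Nonempty := ⟨x, hxS, 1, one_mem _, rfl⟩
    obtain ⟨ν, hνO, hνmax⟩ := Set.Finite.exists_maximalFor (phiJ hα) O hOfin hOne
    obtain ⟨hνS, w, hw, hνeq⟩ := hνO
    have hνext : ν ∈ Set.extremePoints ℝ (convexHull ℝ S) := by
      rw [hνeq]
      have himg2 : (fun y => w.toLinearEquiv y) '' S = S := himgS w hw
      exact extreme_image w.toLinearEquiv himg2 hx
    have hdom : ∀ i ∈ J, 0 ≤ ⟪ν, α i⟫ := by
      intro i hi
      by_contra hneg
      push_neg at hneg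
      have hsν : sRefl (α i) ν ∈ O := by
        refine ⟨hrefl i hi ν hνS, sRefl (α i) * w,
          mul_mem (Subgroup.subset_closure ⟨i, hi, rfl⟩) hw, ?_⟩
        rw [hνeq]; rfl
      have hlt : phiJ hα ν < phiJ hα (sRefl (α i) ν) := by
        rw [sRefl_apply (hα.ne_zero i) ν, map_sub, map_smul, phiJ_apply hα, smul_eq_mul,
          mul_one]
        have hpos : 0 < ⟪α i, α i⟫ := by
          have h9 : ⟪α i, α i⟫ ≠ 0 := fun h0 =>
            hα.ne_zero i ((inner_self_eq_zero (𝕜 := ℝ)).1 h0)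
          exact lt_of_le_of_ne real_inner_self_nonneg (Ne.symm h9)
        have hdiv : 2 * ⟪ν, α i⟫ / ⟪α i, α i⟫ < 0 :=
          div_neg_of_neg_of_pos (by linarith) hpos
        linarith
      exact absurd (hνmax hsν hlt.le) hlt.not_ge
    have hνlam : ν = lam := by
      by_contra hne
      have hβ : lam - ν ≠ 0 := sub_ne_zero.2 (Ne.symm hne)
      have hspan0 : lam - ν ∈ Submodule.span ℝ (Set.range α) := nnCone_le_span α J _ hνS.2
      have hMne : Mγ α lam F vlam (lam - ν) ≠ ⊥ := fun hb =>
        hνS.1 (le_bot_iff.1 (hb ▸ wtSp_le_Mγ lam wtSp F Ep vlam κ hHW hα hκ hspan0))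
      obtain ⟨l, hl, hmne⟩ := exists_list_of_ne_bot lam F vlam hMne
      cases l with
      | nil => exact hβ hl.symm
      | cons i l' =>
        have hmono' : monom F vlam l' ≠ 0 := fun h0 => hmne (by
          rw [show monom F vlam (i :: l') = F i (monom F vlam l') from rfl, h0, map_zero])
        have hwt' : monom F vlam l' ∈ wtSp (lam - wtL α l') :=
          monom_mem lam wtSp F Ep vlam κ hHW l'
        have hlrel : α i + wtL α l' = lam - ν := hl
        have hiJ : i ∈ J := by
          by_contra hiJ
          have h0 := coord_eq_zero hα hνS.2 hiJ
          have h1 : coordφ hα i (lam - ν) = 1 + coordφ hα i (wtL α l') := by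
            rw [← hlrel, map_add, coordφ_self hα]
          have h2 : 0 ≤ coordφ hα i (wtL α l') := coord_nonneg hα (wtL_mem_cone α l') i
          rw [h0] at h1
          linarith
        have hwt'' : monom F vlam l' ∈ wtSp (ν + α i) := by
          have heq : lam - wtL α l' = ν + α i := by
            have h3 : wtL α l' = (lam - ν) - α i := by rw [← hlrel]; abel
            rw [h3]; abel
          rw [← heq]; exact hwt'
        have hwν : wtSp (ν + α i) ≠ ⊥ :=
          (Submodule.ne_bot_iff _).2 ⟨monom F vlam l', hwt'', hmono'⟩
        have hξS : ν + α i ∈ S := by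
          refine mem_wtJ_of lam wtSp F Ep vlam κ J hHW hα hκ hwν ?_ (fun j hj => ?_)
          · rw [show lam - (ν + α i) = (lam - ν) - α i by abel]
            exact sub_mem hspan0 (Submodule.subset_span ⟨i, rfl⟩)
          · have hcs := coordsupp lam J hα hνS.2 hiJ (-1 : ℝ) hj
            rw [show ν - (-1 : ℝ) • α i = ν + α i by rw [neg_smul, one_smul]; abel] at hcs
            exact hcs
        obtain ⟨m, hm, -⟩ := string lam wtSp F Ep vlam κ J hHW hα hκ hfin hνS.1 hνS.2 hiJ
        have hm0 : 0 ≤ m := by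
          have hreal : ((m : ℝ)) = 2 * ⟪ν, α i⟫ / ⟪α i, α i⟫ := by
            have h1 := hm.symm.trans (hκ ν i)
            exact_mod_cast h1
          have hpos : 0 < ⟪α i, α i⟫ := by
            have h9 : ⟪α i, α i⟫ ≠ 0 := fun h0 =>
              hα.ne_zero i ((inner_self_eq_zero (𝕜 := ℝ)).1 h0)
            exact lt_of_le_of_ne real_inner_self_nonneg (Ne.symm h9)
          have h2 : (0 : ℝ) ≤ (m : ℝ) := by
            rw [hreal]
            exact div_nonneg (by linarith [hdom i hiJ]) hpos.le
          exact_mod_cast h2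
        obtain ⟨m', hm', hstr'⟩ := string lam wtSp F Ep vlam κ J hHW hα hκ hfin hξS.1 hξS.2 hiJ
        have hm'2 : m' = m + 2 := by
          have hks := kappa_shift κ hα hκ ν i 1
          rw [one_smul] at hks
          have h1 : ((m' : ℝ) : ℂ) = ((m : ℝ) : ℂ) + 2 * ((1 : ℝ) : ℂ) := by
            rw [← hm', ← hm]; exact hks
          have h2 : (m' : ℝ) = ((m + 2 : ℤ) : ℝ) := by
            push_cast at h1 ⊢
            norm_num at h1
            have h3 : m' = m + 2 := by exact_mod_cast h1
            rw [h3]; push_cast; ring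
          exact_mod_cast h2
        have hmem2 := hstr' 2 (by omega) (by omega)
        have hmem2' : ν - α i ∈ S := by
          rw [show ν + α i - ((2 : ℤ) : ℝ) • α i = ν - α i by
            push_cast
            rw [show ((2 : ℝ)) • α i = α i + α i from two_smul ℝ (α i)]
            abel] at hmem2
          exact hmem2
        have hseg : ν ∈ openSegment ℝ (ν + α i) (ν - α i) := by
          refine ⟨1/2, 1/2, by norm_num, by norm_num, by norm_num, ?_⟩
          module
        have hcontr := hνext.2 (subset_convexHull ℝ S hξS) (subset_convexHull ℝ S hmem2') hseg
        have hadd : ν + α i = ν + 0 := by rw [add_zero]; exact hcontr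
        exact hα.ne_zero i (add_left_cancel hadd)
    refine ⟨w⁻¹, inv_mem hw, ?_⟩
    have hxeq : w x = lam := by rw [← hνeq, hνlam]
    show (w⁻¹ : E ≃ₗᵢ[ℝ] E) lam = x
    have hcoe : (w⁻¹ : E ≃ₗᵢ[ℝ] E) lam = w.symm lam := by rw [LinearIsometryEquiv.coe_inv]
    rw [hcoe, ← hxeq, w.symm_apply_apply]
  exact Set.Subset.antisymm hdir1 hdir2
end

section
/- Let V^λ be a highest weight module and J ⊆ I. Then the barycenter (average) of the finite set wt_{J ∩ J(V^λ)} V^λ equals the barycenter of the Weyl orbit W_{J ∩ J(V^λ)}(λ); that is, the barycenter of a finite standard parabolic set of weights coincides with the barycenter of the vertex set of its convex hull. -/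
open scoped RealInnerProductSpace

section Aux

variable {ι E V : Type*} [NormedAddCommGroup E] [InnerProductSpace ℝ E]
  [FiniteDimensional ℝ E] [AddCommGroup V] [Module ℂ V]
  {α : ι → E} {lam : E} {wtSp : E → Submodule ℂ V} {F Ep : ι → V →ₗ[ℂ] V}
  {vlam : V} {κ : E → ι → ℂ}

lemma sRefl_apply (a μ : E) : sRefl a μ = μ - (2 * ⟪μ, a⟫ / ⟪a, a⟫) • a := by
  rw [sRefl, Submodule.reflection_apply, Submodule.starProjection_orthogonal_val,
    Submodule.starProjection_singleton]
  rw [real_inner_self_eq_norm_sq, real_inner_comm μ a, two_smul]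
  simp only [RCLike.ofReal_real_eq_id, id_eq]
  module

lemma sRefl_fix_iff (a x : E) : sRefl a x = x ↔ ⟪a, x⟫ = 0 := by
  rw [sRefl, Submodule.reflection_eq_self_iff, Submodule.mem_orthogonal_singleton_iff_inner_right]

lemma sRefl_sRefl (a x : E) : sRefl a (sRefl a x) = x := Submodule.reflection_reflection _ _

lemma aux_sep (hα : LinearIndependent ℝ α)
    (hκ : ∀ (μ : E) (i : ι), κ μ i = ((2 * ⟪μ, α i⟫ / ⟪α i, α i⟫ : ℝ) : ℂ))
    {μ ν : E} (hne : μ ≠ ν)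
    (hspan : μ - ν ∈ Submodule.span ℝ (Set.range α)) : ∃ i, κ μ i ≠ κ ν i := by
  by_contra h
  push_neg at h
  have hperp : ∀ i, ⟪μ - ν, α i⟫ = 0 := by
    intro i
    have h1 := h i
    rw [hκ μ i, hκ ν i] at h1
    have h2 : (2 * ⟪μ, α i⟫ / ⟪α i, α i⟫ : ℝ) = 2 * ⟪ν, α i⟫ / ⟪α i, α i⟫ := by
      exact_mod_cast h1
    have hii : ⟪α i, α i⟫ ≠ 0 := inner_self_ne_zero.mpr (hα.ne_zero i)
    rw [inner_sub_left]
    field_simp at h2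
    linarith
  have hall : ∀ x ∈ Submodule.span ℝ (Set.range α), ⟪μ - ν, x⟫ = 0 := by
    intro x hx
    induction hx using Submodule.span_induction with
    | mem x hx => obtain ⟨i, rfl⟩ := hx; exact hperp i
    | zero => simp
    | add x y _ _ ihx ihy => rw [inner_add_right, ihx, ihy]; ring
    | smul r x _ ih => rw [real_inner_smul_right, ih]; ring
  have h0 := hall _ hspan
  rw [inner_self_eq_zero] at h0
  exact hne (sub_eq_zero.mp h0)

lemma aux_indep
    (hsl2 : ∀ i μ, ∀ v ∈ wtSp μ, Ep i (F i v) = F i (Ep i v) + κ μ i • v) :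
    ∀ (s : Finset E) (f : E → V), (∀ μ ∈ s, f μ ∈ wtSp μ) →
      (∀ μ ∈ s, ∀ ν ∈ s, μ ≠ ν → ∃ i, κ μ i ≠ κ ν i) →
      ∑ μ ∈ s, f μ = 0 → ∀ μ ∈ s, f μ = 0 := by
  classical
  intro s
  induction s using Finset.strongInduction with
  | _ s IH =>
    intro f hf hsep hsum μ₀ hμ₀
    by_cases hs : s = {μ₀}
    · rw [hs, Finset.sum_singleton] at hsum; exact hsum
    · have hex : ∃ ν₀ ∈ s, ν₀ ≠ μ₀ := by
        by_contra hc
        push_neg at hc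
        exact hs (Finset.eq_singleton_iff_unique_mem.mpr ⟨hμ₀, fun x hx => hc x hx⟩)
      obtain ⟨ν₀, hν₀, hne⟩ := hex
      obtain ⟨i, hi⟩ := hsep μ₀ hμ₀ ν₀ hν₀ (Ne.symm hne)
      have h1 : ∑ μ ∈ s, (κ μ i - κ ν₀ i) • f μ = 0 := by
        have hterm : ∀ μ ∈ s, (κ μ i - κ ν₀ i) • f μ
            = Ep i (F i (f μ)) - F i (Ep i (f μ)) - κ ν₀ i • f μ := by
          intro μ hμ
          rw [hsl2 i μ (f μ) (hf μ hμ), sub_smul]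
          abel
        rw [Finset.sum_congr rfl hterm, Finset.sum_sub_distrib, Finset.sum_sub_distrib,
          ← map_sum, ← map_sum, ← map_sum, ← map_sum, ← Finset.smul_sum, hsum]
        simp
      have h2 : ∑ μ ∈ s.erase ν₀, (κ μ i - κ ν₀ i) • f μ = 0 := by
        have h3 := Finset.add_sum_erase s (fun μ => (κ μ i - κ ν₀ i) • f μ) hν₀
        rw [h1] at h3
        simpa using h3
      have h4 := IH (s.erase ν₀) (Finset.erase_ssubset hν₀)
        (fun μ => (κ μ i - κ ν₀ i) • f μ)
        (fun μ hμ => Submodule.smul_mem _ _ (hf μ (Finset.mem_of_mem_erase hμ)))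
        (fun μ hμ ν hν hμν => hsep μ (Finset.mem_of_mem_erase hμ) ν
          (Finset.mem_of_mem_erase hν) hμν)
        h2 μ₀ (Finset.mem_erase.mpr ⟨Ne.symm hne, hμ₀⟩)
      rcases smul_eq_zero.mp h4 with h5 | h5
      · exact absurd (sub_eq_zero.mp h5) hi
      · exact h5

lemma aux_monom_wt (hHW : IsHWModule α lam wtSp F Ep vlam κ) :
    ∀ l : List ι, monom F vlam l ∈ wtSp (lam - (l.map α).sum) := by
  intro l
  induction l with
  | nil => simpa [monom] using hHW.vlam_mem
  | cons i l ih =>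
    have h1 := hHW.F_wt i _ _ ih
    have heq : lam - (l.map α).sum - α i = lam - ((List.map α (i :: l)).sum) := by
      rw [List.map_cons, List.sum_cons]
      abel
    rw [heq] at h1
    exact h1

lemma aux_weight_list (hα : LinearIndependent ℝ α)
    (hκ : ∀ (μ : E) (i : ι), κ μ i = ((2 * ⟪μ, α i⟫ / ⟪α i, α i⟫ : ℝ) : ℂ))
    (hHW : IsHWModule α lam wtSp F Ep vlam κ)
    {ν : E} {v : V} (hv : v ∈ wtSp ν) (hv0 : v ≠ 0)
    (hspan : lam - ν ∈ Submodule.span ℝ (Set.range α)) :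
    ∃ l : List ι, lam - ν = (l.map α).sum := by
  classical
  have hvtop : v ∈ Submodule.span ℂ (Set.range (monom F vlam)) := by
    rw [hHW.gen]; trivial
  obtain ⟨c, hc⟩ := Finsupp.mem_span_range_iff_exists_finsupp.mp hvtop
  set M : Finset E := c.support.image (fun l => lam - (l.map α).sum) with hM
  by_cases hνM : ν ∈ M
  · rw [hM, Finset.mem_image] at hνM
    obtain ⟨l, _, hl⟩ := hνM
    exact ⟨l, by rw [← hl]; abel⟩
  · exfalso
    set g : E → V :=
      fun μ => ∑ l ∈ c.support.filter (fun l' => lam - (l'.map α).sum = μ),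
        c l • monom F vlam l with hg
    have hgsum : ∑ μ ∈ M, g μ = v := by
      rw [← hc, Finsupp.sum, hM]
      exact Finset.sum_image' _ (fun l _ => rfl)
    have hgwt : ∀ μ, g μ ∈ wtSp μ := by
      intro μ
      apply Submodule.sum_mem
      intro l hl
      rw [Finset.mem_filter] at hl
      exact Submodule.smul_mem _ _ (hl.2 ▸ aux_monom_wt hHW l)
    have hins : ∀ μ ∈ insert ν M, lam - μ ∈ Submodule.span ℝ (Set.range α) := by
      intro μ hμ
      rcases Finset.mem_insert.mp hμ with h | h
      · rw [h]; exact hspan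
      · rw [hM, Finset.mem_image] at h
        obtain ⟨l, _, rfl⟩ := h
        rw [sub_sub_cancel]
        apply list_sum_mem
        intro x hx
        obtain ⟨j, _, rfl⟩ := List.mem_map.mp hx
        exact Submodule.subset_span ⟨j, rfl⟩
    have key := aux_indep hHW.sl2 (insert ν M) (fun μ => if μ = ν then v else -g μ)
      (by
        intro μ hμ
        by_cases hμν : μ = ν
        · rw [hμν]; simpa using hv
        · simp only [hμν, if_false]; exact neg_mem (hgwt μ))
      (by
        intro μ hμ μ' hμ' hne
        apply aux_sep hα hκ hne
        have heq : μ - μ' = (lam - μ') - (lam - μ) := by abel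
        rw [heq]
        exact sub_mem (hins μ' hμ') (hins μ hμ))
      (by
        rw [Finset.sum_insert hνM, if_pos rfl]
        have hcong : ∀ μ ∈ M, (if μ = ν then v else -g μ) = -g μ := by
          intro μ hμ
          rw [if_neg]
          rintro rfl
          exact hνM hμ
        rw [Finset.sum_congr rfl hcong, Finset.sum_neg_distrib, hgsum]
        simp)
      ν (Finset.mem_insert_self ν M)
    simp only [if_pos rfl] at key
    exact hv0 key

lemma aux_letters (hα : LinearIndependent ℝ α) {K : Set ι} {l : List ι}
    (h : (l.map α).sum ∈ Submodule.span ℝ (α '' K)) : ∀ j ∈ l, j ∈ K := by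
  classical
  rw [Set.image_eq_range] at h
  obtain ⟨d, hd⟩ := Finsupp.mem_span_range_iff_exists_finsupp.mp h
  set d' : ι →₀ ℝ := d.embDomain (Function.Embedding.subtype _) with hd'def
  have hd's : ∀ j ∈ d'.support, j ∈ K := by
    intro j hj
    rw [hd'def, Finsupp.support_embDomain, Finset.mem_map] at hj
    obtain ⟨k, _, hk⟩ := hj
    rw [← hk]
    exact k.2
  have hd'sum : (d'.sum fun j a => a • α j) = (l.map α).sum := by
    rw [hd'def, Finsupp.sum_embDomain]
    exact hd
  intro j hj
  set s : Finset ι := l.toFinset ∪ d'.support with hs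
  have key : ∑ j' ∈ s, ((l.count j' : ℝ) - d' j') • α j' = 0 := by
    have e1 : ∑ j' ∈ s, (l.count j' : ℝ) • α j' = (l.map α).sum := by
      calc ∑ j' ∈ s, (l.count j' : ℝ) • α j'
          = ∑ j' ∈ s, l.count j' • α j' :=
            Finset.sum_congr rfl fun j' _ => Nat.cast_smul_eq_nsmul ℝ _ _
        _ = ∑ j' ∈ l.toFinset, l.count j' • α j' := by
            refine (Finset.sum_subset Finset.subset_union_left ?_).symm
            intro x _ hx
            rw [List.count_eq_zero.mpr (fun hmem => hx (List.mem_toFinset.mpr hmem))]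
            simp
        _ = (l.map α).sum := (Finset.sum_list_map_count l α).symm
    have e2 : ∑ j' ∈ s, (d' j') • α j' = (l.map α).sum := by
      rw [← hd'sum]
      exact (Finsupp.sum_of_support_subset d' Finset.subset_union_right
        (fun j a => a • α j) (fun i _ => zero_smul ℝ _)).symm
    have e3 : ∀ j' ∈ s, ((l.count j' : ℝ) - d' j') • α j'
        = (l.count j' : ℝ) • α j' - (d' j') • α j' := fun j' _ => sub_smul _ _ _
    rw [Finset.sum_congr rfl e3, Finset.sum_sub_distrib, e1, e2, sub_self]
  have h0 := linearIndependent_iff'.mp hα s _ key j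
    (Finset.mem_union_left _ (List.mem_toFinset.mpr hj))
  have hcount : (0:ℝ) < l.count j := by
    exact_mod_cast List.count_pos_iff.mpr hj
  have hd'j : d' j ≠ 0 := by
    intro hz
    rw [hz, sub_zero] at h0
    linarith
  exact hd's j (Finsupp.mem_support_iff.mpr hd'j)

lemma aux_count [DecidableEq ι] (hα : LinearIndependent ℝ α) {l l' : List ι} {i : ι} {k : ℕ}
    (h : (l'.map α).sum = (l.map α).sum - k • α i) : k ≤ l.count i := by
  classical
  set s : Finset ι := (l.toFinset ∪ l'.toFinset) ∪ {i} with hs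
  have his : i ∈ s := Finset.mem_union_right _ (Finset.mem_singleton_self i)
  have e0 : ∀ (m : List ι), m.toFinset ⊆ s →
      ∑ j' ∈ s, (m.count j' : ℝ) • α j' = (m.map α).sum := by
    intro m hm
    calc ∑ j' ∈ s, (m.count j' : ℝ) • α j'
        = ∑ j' ∈ s, m.count j' • α j' :=
          Finset.sum_congr rfl fun j' _ => Nat.cast_smul_eq_nsmul ℝ _ _
      _ = ∑ j' ∈ m.toFinset, m.count j' • α j' := by
          refine (Finset.sum_subset hm ?_).symm
          intro x _ hx
          rw [List.count_eq_zero.mpr (fun hmem => hx (List.mem_toFinset.mpr hmem))]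
          simp
      _ = (m.map α).sum := (Finset.sum_list_map_count m α).symm
  have hls : l.toFinset ⊆ s := Finset.subset_union_left.trans Finset.subset_union_left
  have hl's : l'.toFinset ⊆ s :=
    Finset.subset_union_right.trans Finset.subset_union_left
  rw [← Nat.cast_smul_eq_nsmul ℝ] at h
  have key : ∑ j' ∈ s,
      ((l'.count j' : ℝ) - l.count j' + (if j' = i then (k:ℝ) else 0)) • α j' = 0 := by
    have e3 : ∀ j' ∈ s,
        ((l'.count j' : ℝ) - l.count j' + (if j' = i then (k:ℝ) else 0)) • α j'
        = ((l'.count j' : ℝ) • α j' - (l.count j' : ℝ) • α j')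
          + (if j' = i then (k:ℝ) • α j' else 0) := by
      intro j' _
      rw [add_smul, sub_smul]
      congr 1
      split <;> simp
    rw [Finset.sum_congr rfl e3, Finset.sum_add_distrib, Finset.sum_sub_distrib,
      e0 l hls, e0 l' hl's, Finset.sum_ite_eq' s i (fun j' => (k:ℝ) • α j'), if_pos his, h]
    abel
  have h0 := linearIndependent_iff'.mp hα s _ key i his
  rw [if_pos rfl] at h0
  have hk : (k:ℝ) ≤ (l.count i : ℝ) := by
    have h1 : (0:ℝ) ≤ (l'.count i : ℝ) := Nat.cast_nonneg _
    linarith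
  exact_mod_cast hk

lemma aux_Fpow_wt (hHW : IsHWModule α lam wtSp F Ep vlam κ) {i : ι} {ν : E} {v : V}
    (hv : v ∈ wtSp ν) : ∀ j : ℕ, (F i ^ j) v ∈ wtSp (ν - j • α i) := by
  intro j
  induction j with
  | zero => simpa using hv
  | succ n ih =>
    rw [pow_succ', Module.End.mul_apply]
    have h1 := hHW.F_wt i _ _ ih
    have heq : ν - n • α i - α i = ν - (n+1) • α i := by
      rw [succ_nsmul]; abel
    rwa [heq] at h1

lemma aux_Epow_wt (hHW : IsHWModule α lam wtSp F Ep vlam κ) {i : ι} {ν : E} {v : V}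
    (hv : v ∈ wtSp ν) : ∀ j : ℕ, (Ep i ^ j) v ∈ wtSp (ν + j • α i) := by
  intro j
  induction j with
  | zero => simpa using hv
  | succ n ih =>
    rw [pow_succ', Module.End.mul_apply]
    have h1 := hHW.E_wt i _ _ ih
    have heq : ν + n • α i + α i = ν + (n+1) • α i := by
      rw [succ_nsmul]; abel
    rwa [heq] at h1

lemma aux_kappa_sub (hα : LinearIndependent ℝ α)
    (hκ : ∀ (μ : E) (i : ι), κ μ i = ((2 * ⟪μ, α i⟫ / ⟪α i, α i⟫ : ℝ) : ℂ))
    (ν : E) (i : ι) (j : ℕ) : κ (ν - j • α i) i = κ ν i - 2 * j := by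
  have hii : ⟪α i, α i⟫ ≠ 0 := inner_self_ne_zero.mpr (hα.ne_zero i)
  rw [hκ, hκ]
  have heq : (2 * ⟪ν - j • α i, α i⟫ / ⟪α i, α i⟫ : ℝ)
      = 2 * ⟪ν, α i⟫ / ⟪α i, α i⟫ - 2 * j := by
    rw [inner_sub_left, ← Nat.cast_smul_eq_nsmul ℝ, real_inner_smul_left]
    field_simp
  rw [heq]
  push_cast
  ring

lemma aux_kappa_add (hα : LinearIndependent ℝ α)
    (hκ : ∀ (μ : E) (i : ι), κ μ i = ((2 * ⟪μ, α i⟫ / ⟪α i, α i⟫ : ℝ) : ℂ))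
    (ν : E) (i : ι) (j : ℕ) : κ (ν + j • α i) i = κ ν i + 2 * j := by
  have hii : ⟪α i, α i⟫ ≠ 0 := inner_self_ne_zero.mpr (hα.ne_zero i)
  rw [hκ, hκ]
  have heq : (2 * ⟪ν + j • α i, α i⟫ / ⟪α i, α i⟫ : ℝ)
      = 2 * ⟪ν, α i⟫ / ⟪α i, α i⟫ + 2 * j := by
    rw [inner_add_left, ← Nat.cast_smul_eq_nsmul ℝ, real_inner_smul_left]
    field_simp
  rw [heq]
  push_cast
  ring

lemma aux_EF (hα : LinearIndependent ℝ α)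
    (hκ : ∀ (μ : E) (i : ι), κ μ i = ((2 * ⟪μ, α i⟫ / ⟪α i, α i⟫ : ℝ) : ℂ))
    (hHW : IsHWModule α lam wtSp F Ep vlam κ) {i : ι} {θ : E} {w : V}
    (hw : w ∈ wtSp θ) (hpr : Ep i w = 0) :
    ∀ j : ℕ, Ep i ((F i ^ (j+1)) w) = (((j:ℂ)+1) * (κ θ i - j)) • (F i ^ j) w := by
  intro j
  induction j with
  | zero =>
    rw [pow_one, hHW.sl2 i θ w hw, hpr]
    simp
  | succ n ih =>
    have hu : (F i ^ (n+1)) w ∈ wtSp (θ - (n+1) • α i) := aux_Fpow_wt hHW hw (n+1)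
    rw [pow_succ' (F i) (n+1), Module.End.mul_apply, hHW.sl2 i _ _ hu, ih, map_smul,
      aux_kappa_sub hα hκ θ i (n+1), ← Module.End.mul_apply, ← pow_succ', ← add_smul]
    congr 1
    push_cast
    ring

lemma aux_FE (hα : LinearIndependent ℝ α)
    (hκ : ∀ (μ : E) (i : ι), κ μ i = ((2 * ⟪μ, α i⟫ / ⟪α i, α i⟫ : ℝ) : ℂ))
    (hHW : IsHWModule α lam wtSp F Ep vlam κ) {i : ι} {θ : E} {w : V}
    (hw : w ∈ wtSp θ) (hpr : F i w = 0) :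
    ∀ j : ℕ, F i ((Ep i ^ (j+1)) w) = (-((j:ℂ)+1) * (κ θ i + j)) • (Ep i ^ j) w := by
  intro j
  induction j with
  | zero =>
    have h1 := hHW.sl2 i θ w hw
    rw [hpr, map_zero] at h1
    have h2 : F i (Ep i w) = -(κ θ i • w) := by
      rw [eq_comm, neg_eq_iff_add_eq_zero, add_comm]
      exact h1.symm
    rw [pow_one, h2]
    simp
  | succ n ih =>
    have hx : (Ep i ^ (n+1)) w ∈ wtSp (θ + (n+1) • α i) := aux_Epow_wt hHW hw (n+1)
    have hsl := hHW.sl2 i _ _ hx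
    have h2 : F i (Ep i ((Ep i ^ (n+1)) w))
        = Ep i (F i ((Ep i ^ (n+1)) w)) - κ (θ + (n+1) • α i) i • (Ep i ^ (n+1)) w := by
      rw [hsl]; abel
    rw [pow_succ' (Ep i) (n+1), Module.End.mul_apply, h2, ih, map_smul,
      aux_kappa_add hα hκ θ i (n+1), ← Module.End.mul_apply, ← pow_succ', ← sub_smul]
    congr 1
    push_cast
    ring

lemma aux_Enilp (hα : LinearIndependent ℝ α)
    (hκ : ∀ (μ : E) (i : ι), κ μ i = ((2 * ⟪μ, α i⟫ / ⟪α i, α i⟫ : ℝ) : ℂ))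
    (hHW : IsHWModule α lam wtSp F Ep vlam κ) {ν : E} {v : V}
    (hv : v ∈ wtSp ν) (i : ι)
    (hspan : lam - ν ∈ Submodule.span ℝ (Set.range α)) :
    ∃ j : ℕ, (Ep i ^ j) v = 0 := by
  classical
  by_cases hv0 : v = 0
  · exact ⟨0, by simpa using hv0⟩
  obtain ⟨l, hl⟩ := aux_weight_list hα hκ hHW hv hv0 hspan
  refine ⟨l.count i + 1, ?_⟩
  by_contra h0
  have hwt : (Ep i ^ (l.count i + 1)) v ∈ wtSp (ν + (l.count i + 1) • α i) :=
    aux_Epow_wt hHW hv _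
  have hαmem : ∀ m : ℕ, (m • α i : E) ∈ Submodule.span ℝ (Set.range α) := by
    intro m
    rw [← Nat.cast_smul_eq_nsmul ℝ]
    exact Submodule.smul_mem _ _ (Submodule.subset_span ⟨i, rfl⟩)
  have hspan2 : lam - (ν + (l.count i + 1) • α i) ∈ Submodule.span ℝ (Set.range α) := by
    have heq : lam - (ν + (l.count i + 1) • α i)
        = (lam - ν) - (l.count i + 1) • α i := by abel
    rw [heq]
    exact sub_mem hspan (hαmem _)
  obtain ⟨l', hl'⟩ := aux_weight_list hα hκ hHW hwt h0 hspan2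
  have heq2 : (l'.map α).sum = (l.map α).sum - (l.count i + 1) • α i := by
    rw [← hl, ← hl']; abel
  have := aux_count hα heq2
  omega

lemma aux_S_iff (hα : LinearIndependent ℝ α)
    (hκ : ∀ (μ : E) (i : ι), κ μ i = ((2 * ⟪μ, α i⟫ / ⟪α i, α i⟫ : ℝ) : ℂ))
    (hHW : IsHWModule α lam wtSp F Ep vlam κ) (K : Set ι) (μ : E) :
    μ ∈ wtJ α lam (wtSet wtSp) K
      ↔ (wtSp μ ≠ ⊥ ∧ lam - μ ∈ Submodule.span ℝ (α '' K)) := by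
  constructor
  · rintro ⟨hw, hc⟩
    refine ⟨hw, ?_⟩
    have hle : nnCone α K ≤ (Submodule.span ℝ (α '' K)).toAddSubmonoid :=
      AddSubmonoid.closure_le.mpr (fun x hx => Submodule.subset_span hx)
    exact hle hc
  · rintro ⟨hw, hc⟩
    obtain ⟨v, hv, hv0⟩ := (Submodule.ne_bot_iff _).mp hw
    have hspan : lam - μ ∈ Submodule.span ℝ (Set.range α) :=
      Submodule.span_mono (Set.image_subset_range α K) hc
    obtain ⟨l, hl⟩ := aux_weight_list hα hκ hHW hv hv0 hspan
    have hlet : ∀ j ∈ l, j ∈ K := aux_letters hα (hl ▸ hc)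
    refine ⟨hw, ?_⟩
    show lam - μ ∈ nnCone α K
    rw [hl]
    apply list_sum_mem
    intro x hx
    obtain ⟨j, hj, rfl⟩ := List.mem_map.mp hx
    exact AddSubmonoid.subset_closure (Set.mem_image_of_mem α (hlet j hj))

lemma aux_stab (hα : LinearIndependent ℝ α)
    (hκ : ∀ (μ : E) (i : ι), κ μ i = ((2 * ⟪μ, α i⟫ / ⟪α i, α i⟫ : ℝ) : ℂ))
    (hHW : IsHWModule α lam wtSp F Ep vlam κ) {K : Set ι}
    (hfin : (wtJ α lam (wtSet wtSp) K).Finite)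
    {i : ι} (hiK : i ∈ K) {μ : E} (hμ : μ ∈ wtJ α lam (wtSet wtSp) K) :
    sRefl (α i) μ ∈ wtJ α lam (wtSet wtSp) K := by
  classical
  have hαi0 : α i ≠ 0 := hα.ne_zero i
  have hαiK : α i ∈ Submodule.span ℝ (α '' K) :=
    Submodule.subset_span (Set.mem_image_of_mem α hiK)
  have hαiKn : ∀ m : ℕ, (m • α i : E) ∈ Submodule.span ℝ (α '' K) := by
    intro m
    rw [← Nat.cast_smul_eq_nsmul ℝ]
    exact Submodule.smul_mem _ _ hαiK
  have hsmulinj : ∀ a b : ℕ, (a • α i : E) = b • α i → a = b := by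
    intro a b hab
    rw [← Nat.cast_smul_eq_nsmul ℝ, ← Nat.cast_smul_eq_nsmul ℝ] at hab
    exact_mod_cast smul_left_injective ℝ hαi0 hab
  set r : ℝ := 2 * ⟪μ, α i⟫ / ⟪α i, α i⟫ with hr
  have hsr : sRefl (α i) μ = μ - r • α i := sRefl_apply (α i) μ
  have hrκ : (r : ℂ) = κ μ i := (hκ μ i).symm
  obtain ⟨hwne, hmem⟩ := (aux_S_iff hα hκ hHW K μ).mp hμ
  obtain ⟨v, hv, hv0⟩ := (Submodule.ne_bot_iff _).mp hwne
  have hspanμ : lam - μ ∈ Submodule.span ℝ (Set.range α) :=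
    Submodule.span_mono (Set.image_subset_range α K) hmem
  -- upward string from v
  have hEex := aux_Enilp hα hκ hHW hv i hspanμ
  have hfind0 : Nat.find hEex ≠ 0 := by
    intro h
    have h1 := Nat.find_spec hEex
    rw [h] at h1
    simp only [pow_zero, Module.End.one_apply] at h1
    exact hv0 h1
  set k : ℕ := Nat.find hEex - 1 with hk
  have hkfind : Nat.find hEex = k + 1 := by omega
  have hk1 : (Ep i ^ (k+1)) v = 0 := by rw [← hkfind]; exact Nat.find_spec hEex
  have hk0 : (Ep i ^ k) v ≠ 0 := Nat.find_min hEex (by omega)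
  set w : V := (Ep i ^ k) v with hw
  set θ : E := μ + k • α i with hθ
  have hwθ : w ∈ wtSp θ := aux_Epow_wt hHW hv k
  have hEw : Ep i w = 0 := by
    rw [hw, ← Module.End.mul_apply, ← pow_succ']
    exact hk1
  have hθmem : lam - θ ∈ Submodule.span ℝ (α '' K) := by
    have heq : lam - θ = (lam - μ) - k • α i := by rw [hθ]; abel
    rw [heq]
    exact sub_mem hmem (hαiKn k)
  -- F-nilpotence at w from finiteness
  have hFex : ∃ j : ℕ, (F i ^ j) w = 0 := by
    by_contra h0
    push_neg at h0
    have hinj : Function.Injective (fun j : ℕ => θ - j • α i) := by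
      intro a b hab
      simp only [sub_right_inj] at hab
      exact hsmulinj a b hab
    have hmemall : ∀ j : ℕ, θ - j • α i ∈ wtJ α lam (wtSet wtSp) K := by
      intro j
      have hwtj : (F i ^ j) w ∈ wtSp (θ - j • α i) := aux_Fpow_wt hHW hwθ j
      refine (aux_S_iff hα hκ hHW K _).mpr
        ⟨(Submodule.ne_bot_iff _).mpr ⟨_, hwtj, h0 j⟩, ?_⟩
      have heq : lam - (θ - j • α i) = (lam - θ) + j • α i := by abel
      rw [heq]
      exact add_mem hθmem (hαiKn j)
    exact (Set.infinite_of_injective_forall_mem hinj hmemall) hfin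
  have hPfind0 : Nat.find hFex ≠ 0 := by
    intro h
    have h1 := Nat.find_spec hFex
    rw [h] at h1
    simp only [pow_zero, Module.End.one_apply] at h1
    exact hk0 h1
  set P : ℕ := Nat.find hFex - 1 with hP
  have hPfind : Nat.find hFex = P + 1 := by omega
  have hP1 : (F i ^ (P+1)) w = 0 := by rw [← hPfind]; exact Nat.find_spec hFex
  have hPne : ∀ j ≤ P, (F i ^ j) w ≠ 0 := fun j hj => Nat.find_min hFex (by omega)
  -- κ θ i = P
  have hEF := aux_EF hα hκ hHW hwθ hEw P
  rw [hP1, map_zero] at hEF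
  have hκθ : κ θ i = (P:ℂ) := by
    rcases smul_eq_zero.mp hEF.symm with h | h
    · rcases mul_eq_zero.mp h with h1 | h1
      · exfalso
        have h2 : ((P:ℂ)+1) = ((P+1 : ℕ) : ℂ) := by push_cast; ring
        rw [h2] at h1
        exact Nat.cast_ne_zero.mpr (Nat.succ_ne_zero P) h1
      · exact sub_eq_zero.mp h1
    · exact absurd h (hPne P le_rfl)
  have hκμ : κ μ i = (P:ℂ) - 2 * k := by
    have hμθ : μ = θ - k • α i := by rw [hθ]; abel
    rw [hμθ, aux_kappa_sub hα hκ θ i k, hκθ]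
  have hrval : r = (P:ℝ) - 2 * k := by
    have h1 : ((r:ℝ):ℂ) = (((P:ℝ) - 2 * k : ℝ):ℂ) := by
      rw [hrκ, hκμ]; push_cast; ring
    exact_mod_cast h1
  by_cases hkP : k ≤ P
  · -- reflected weight is in the string below θ
    have hrefl : sRefl (α i) μ = θ - (P - k) • α i := by
      rw [hsr, hrval, hθ, ← Nat.cast_smul_eq_nsmul ℝ (P - k), ← Nat.cast_smul_eq_nsmul ℝ k,
        Nat.cast_sub hkP]
      module
    have hwt : (F i ^ (P - k)) w ∈ wtSp (θ - (P-k) • α i) := aux_Fpow_wt hHW hwθ _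
    have hne := hPne (P - k) (by omega)
    rw [hrefl]
    refine (aux_S_iff hα hκ hHW K _).mpr
      ⟨(Submodule.ne_bot_iff _).mpr ⟨_, hwt, hne⟩, ?_⟩
    have heq : lam - (θ - (P-k) • α i) = (lam - θ) + (P-k) • α i := by abel
    rw [heq]
    exact add_mem hθmem (hαiKn _)
  · -- downward case
    have hrneg : r < 0 := by
      rw [hrval]
      have h1 : (P:ℝ) + 1 ≤ (k:ℝ) := by exact_mod_cast (by omega : P + 1 ≤ k)
      have h2 : (0:ℝ) ≤ (P:ℝ) := Nat.cast_nonneg P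
      linarith
    set TT : Set ℕ := {j : ℕ | μ - j • α i ∈ wtJ α lam (wtSet wtSp) K} with hTT
    have hTT0 : (0:ℕ) ∈ TT := by
      simp only [hTT, Set.mem_setOf_eq, zero_smul, sub_zero]
      exact hμ
    have hTTfin : TT.Finite := by
      apply Set.Finite.preimage ?_ hfin
      intro a _ b _ hab
      simp only [sub_right_inj] at hab
      exact hsmulinj a b hab
    have hTTne : hTTfin.toFinset.Nonempty := ⟨0, hTTfin.mem_toFinset.mpr hTT0⟩
    set N : ℕ := hTTfin.toFinset.max' hTTne with hN
    have hNmem : N ∈ TT := hTTfin.mem_toFinset.mp (hTTfin.toFinset.max'_mem hTTne)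
    have hNmax : ∀ j ∈ TT, j ≤ N := fun j hj =>
      hTTfin.toFinset.le_max' j (hTTfin.mem_toFinset.mpr hj)
    set μm : E := μ - N • α i with hμm
    have hμmS : μm ∈ wtJ α lam (wtSet wtSp) K := hNmem
    obtain ⟨hwm, hmm⟩ := (aux_S_iff hα hκ hHW K μm).mp hμmS
    obtain ⟨u, hu, hu0⟩ := (Submodule.ne_bot_iff _).mp hwm
    have hFu : F i u = 0 := by
      by_contra hFu0
      have hwt : F i u ∈ wtSp (μm - α i) := hHW.F_wt i _ u hu
      have heq : μ - (N+1) • α i = μm - α i := by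
        rw [hμm, succ_nsmul]; abel
      have hS : (N+1) ∈ TT := by
        show μ - (N+1) • α i ∈ wtJ α lam (wtSet wtSp) K
        rw [heq]
        refine (aux_S_iff hα hκ hHW K _).mpr
          ⟨(Submodule.ne_bot_iff _).mpr ⟨_, hwt, hFu0⟩, ?_⟩
        have heq2 : lam - (μm - α i) = (lam - μm) + α i := by abel
        rw [heq2]
        exact add_mem hmm hαiK
      have := hNmax (N+1) hS
      omega
    have hspanm : lam - μm ∈ Submodule.span ℝ (Set.range α) :=
      Submodule.span_mono (Set.image_subset_range α K) hmm
    have hEexu := aux_Enilp hα hκ hHW hu i hspanm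
    have hfindu0 : Nat.find hEexu ≠ 0 := by
      intro h
      have h1 := Nat.find_spec hEexu
      rw [h] at h1
      simp only [pow_zero, Module.End.one_apply] at h1
      exact hu0 h1
    set k' : ℕ := Nat.find hEexu - 1 with hk'
    have hk'find : Nat.find hEexu = k' + 1 := by omega
    have hk'1 : (Ep i ^ (k'+1)) u = 0 := by rw [← hk'find]; exact Nat.find_spec hEexu
    have hk'ne : ∀ j ≤ k', (Ep i ^ j) u ≠ 0 := fun j hj => Nat.find_min hEexu (by omega)
    have hFE := aux_FE hα hκ hHW hu hFu k'
    rw [hk'1, map_zero] at hFE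
    have hκμm : κ μm i = -(k':ℂ) := by
      rcases smul_eq_zero.mp hFE.symm with h | h
      · rcases mul_eq_zero.mp h with h1 | h1
        · exfalso
          rw [neg_eq_zero] at h1
          have h2 : ((k':ℂ)+1) = ((k'+1 : ℕ) : ℂ) := by push_cast; ring
          rw [h2] at h1
          exact Nat.cast_ne_zero.mpr (Nat.succ_ne_zero k') h1
        · rw [add_eq_zero_iff_eq_neg] at h1
          exact h1
      · exact absurd h (hk'ne k' le_rfl)
    have hκμm2 : κ μm i = κ μ i - 2 * N := aux_kappa_sub hα hκ μ i N
    have hrval2 : r = 2 * (N:ℝ) - k' := by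
      have h1 : ((r:ℝ):ℂ) = ((2 * (N:ℝ) - k' : ℝ):ℂ) := by
        rw [hrκ]
        have : κ μ i = 2 * (N:ℂ) - k' := by
          have := hκμm2
          rw [hκμm] at this
          linear_combination -this
        rw [this]
        push_cast
        ring
      exact_mod_cast h1
    have hNk' : N ≤ k' := by
      have h1 : 2 * (N:ℝ) - k' < 0 := by rw [← hrval2]; exact hrneg
      have h2 : (N:ℝ) ≤ 2 * N := by
        have := Nat.cast_nonneg (α := ℝ) N
        linarith
      have h3 : (N:ℝ) < k' := by linarith
      exact_mod_cast h3.le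
    have hwt : (Ep i ^ (k' - N)) u ∈ wtSp (μm + (k'-N) • α i) := aux_Epow_wt hHW hu _
    have hne : (Ep i ^ (k'-N)) u ≠ 0 := hk'ne _ (by omega)
    have hrefl : sRefl (α i) μ = μm + (k'-N) • α i := by
      rw [hsr, hrval2, hμm, ← Nat.cast_smul_eq_nsmul ℝ (k'-N), ← Nat.cast_smul_eq_nsmul ℝ N,
        Nat.cast_sub hNk']
      module
    rw [hrefl]
    refine (aux_S_iff hα hκ hHW K _).mpr
      ⟨(Submodule.ne_bot_iff _).mpr ⟨_, hwt, hne⟩, ?_⟩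
    have heq : lam - (μm + (k'-N) • α i) = (lam - μm) - (k'-N) • α i := by abel
    rw [heq]
    exact sub_mem hmm (hαiKn _)

end Aux

/-- the barycenter of the finite standard parabolic set
`wt_{J ∩ J(V^λ)} V^λ` equals the barycenter of the vertex set `W_{J ∩ J(V^λ)}(λ)` of its
convex hull. -/
theorem barycenter_eq_barycenter_of_orbit {ι E V : Type*} [NormedAddCommGroup E]
    [InnerProductSpace ℝ E] [FiniteDimensional ℝ E] [AddCommGroup V] [Module ℂ V]
    (α : ι → E) (lam : E) (wtSp : E → Submodule ℂ V) (F Ep : ι → V →ₗ[ℂ] V)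
    (vlam : V) (κ : E → ι → ℂ)
    (hα : LinearIndependent ℝ α)
    (hκ : ∀ (μ : E) (i : ι), κ μ i = ((2 * ⟪μ, α i⟫ / ⟪α i, α i⟫ : ℝ) : ℂ))
    (hHW : IsHWModule α lam wtSp F Ep vlam κ)
    (J : Set ι)
    (hfin : (wtJ α lam (wtSet wtSp) (J ∩ integrable F vlam κ lam)).Finite)
    (horb : (weylOrbit α (J ∩ integrable F vlam κ lam) lam).Finite)
    (hvert : Set.extremePoints ℝ
        (convexHull ℝ (wtJ α lam (wtSet wtSp) (J ∩ integrable F vlam κ lam)))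
      = weylOrbit α (J ∩ integrable F vlam κ lam) lam) :
    (hfin.toFinset.card : ℝ)⁻¹ • ∑ μ ∈ hfin.toFinset, μ
      = (horb.toFinset.card : ℝ)⁻¹ • ∑ μ ∈ horb.toFinset, μ := by
  classical
  set K : Set ι := J ∩ integrable F vlam κ lam with hK
  have hlamS : lam ∈ wtJ α lam (wtSet wtSp) K := by
    constructor
    · show wtSp lam ≠ ⊥
      exact (Submodule.ne_bot_iff _).mpr ⟨vlam, hHW.vlam_mem, hHW.vlam_ne⟩
    · show lam - lam ∈ nnCone α K
      rw [sub_self]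
      exact (nnCone α K).zero_mem
  have hlamO : lam ∈ weylOrbit α K lam := ⟨1, Subgroup.one_mem _, rfl⟩
  have hScard : (0:ℝ) < (hfin.toFinset.card : ℝ) := by
    have h1 : 0 < hfin.toFinset.card :=
      Finset.card_pos.mpr ⟨lam, hfin.mem_toFinset.mpr hlamS⟩
    exact_mod_cast h1
  have hOcard : (0:ℝ) < (horb.toFinset.card : ℝ) := by
    have h1 : 0 < horb.toFinset.card :=
      Finset.card_pos.mpr ⟨lam, horb.mem_toFinset.mpr hlamO⟩
    exact_mod_cast h1
  have hsgen : ∀ i ∈ K, sRefl (α i) ∈ weylGrp α K := fun i hi =>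
    Subgroup.subset_closure (Set.mem_image_of_mem _ hi)
  have hsinv : ∀ a : E, (sRefl a)⁻¹ = sRefl a := by
    intro a
    have hmul : sRefl a * sRefl a = 1 := by
      apply LinearIsometryEquiv.ext
      intro x
      show sRefl a (sRefl a x) = x
      exact sRefl_sRefl a x
    exact inv_eq_of_mul_eq_one_right hmul
  have hOstab : ∀ i ∈ K, ∀ μ ∈ weylOrbit α K lam, sRefl (α i) μ ∈ weylOrbit α K lam := by
    rintro i hi μ ⟨g, hg, rfl⟩
    exact ⟨sRefl (α i) * g, mul_mem (hsgen i hi) hg, rfl⟩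
  have himgS : ∀ i ∈ K, ⟪α i, ∑ μ ∈ hfin.toFinset, μ⟫ = 0 := by
    intro i hi
    have himg : hfin.toFinset.image (fun μ => sRefl (α i) μ) = hfin.toFinset := by
      apply Finset.ext
      intro μ
      simp only [Finset.mem_image, Set.Finite.mem_toFinset]
      constructor
      · rintro ⟨ν, hν, rfl⟩
        exact aux_stab hα hκ hHW hfin hi hν
      · intro hμ
        exact ⟨sRefl (α i) μ, aux_stab hα hκ hHW hfin hi hμ, sRefl_sRefl _ _⟩
    have hsum : ∑ μ ∈ hfin.toFinset, sRefl (α i) μ = ∑ μ ∈ hfin.toFinset, μ := by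
      conv_rhs => rw [← himg]
      rw [Finset.sum_image (fun a _ b _ h => (sRefl (α i)).injective h)]
    have hfix : sRefl (α i) (∑ μ ∈ hfin.toFinset, μ) = ∑ μ ∈ hfin.toFinset, μ := by
      rw [map_sum]
      exact hsum
    exact (sRefl_fix_iff _ _).mp hfix
  have himgO : ∀ i ∈ K, ⟪α i, ∑ μ ∈ horb.toFinset, μ⟫ = 0 := by
    intro i hi
    have himg : horb.toFinset.image (fun μ => sRefl (α i) μ) = horb.toFinset := by
      apply Finset.ext
      intro μ
      simp only [Finset.mem_image, Set.Finite.mem_toFinset]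
      constructor
      · rintro ⟨ν, hν, rfl⟩
        exact hOstab i hi ν hν
      · intro hμ
        exact ⟨sRefl (α i) μ, hOstab i hi _ hμ, sRefl_sRefl _ _⟩
    have hsum : ∑ μ ∈ horb.toFinset, sRefl (α i) μ = ∑ μ ∈ horb.toFinset, μ := by
      conv_rhs => rw [← himg]
      rw [Finset.sum_image (fun a _ b _ h => (sRefl (α i)).injective h)]
    have hfix : sRefl (α i) (∑ μ ∈ horb.toFinset, μ) = ∑ μ ∈ horb.toFinset, μ := by
      rw [map_sum]
      exact hsum
    exact (sRefl_fix_iff _ _).mp hfix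
  have hScoset : ∀ μ ∈ hfin.toFinset, μ - lam ∈ Submodule.span ℝ (α '' K) := by
    intro μ hμ
    have h1 := ((aux_S_iff hα hκ hHW K μ).mp (hfin.mem_toFinset.mp hμ)).2
    have h2 : μ - lam = -(lam - μ) := by abel
    rw [h2]
    exact neg_mem h1
  have hOcoset : ∀ μ ∈ horb.toFinset, μ - lam ∈ Submodule.span ℝ (α '' K) := by
    intro μ hμ
    obtain ⟨g, hg, rfl⟩ := horb.mem_toFinset.mp hμ
    have main : ∀ g : E ≃ₗᵢ[ℝ] E, g ∈ weylGrp α K →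
        ((∀ x, x ∈ Submodule.span ℝ (α '' K) → g x ∈ Submodule.span ℝ (α '' K))
          ∧ (∀ x, x ∈ Submodule.span ℝ (α '' K) → g⁻¹ x ∈ Submodule.span ℝ (α '' K))
          ∧ g lam - lam ∈ Submodule.span ℝ (α '' K)
          ∧ g⁻¹ lam - lam ∈ Submodule.span ℝ (α '' K)) := by
      intro g hg
      induction hg using Subgroup.closure_induction with
      | mem s hs =>
        obtain ⟨i, hi, rfl⟩ := hs
        have hαiK : α i ∈ Submodule.span ℝ (α '' K) :=
          Submodule.subset_span (Set.mem_image_of_mem α hi)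
        have hmap : ∀ x, x ∈ Submodule.span ℝ (α '' K) →
            sRefl (α i) x ∈ Submodule.span ℝ (α '' K) := by
          intro x hx
          rw [sRefl_apply]
          exact sub_mem hx (Submodule.smul_mem _ _ hαiK)
        have hlm : sRefl (α i) lam - lam ∈ Submodule.span ℝ (α '' K) := by
          rw [sRefl_apply]
          have h1 : lam - (2 * ⟪lam, α i⟫ / ⟪α i, α i⟫) • α i - lam
              = -((2 * ⟪lam, α i⟫ / ⟪α i, α i⟫) • α i) := by abel
          rw [h1]
          exact neg_mem (Submodule.smul_mem _ _ hαiK)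
        exact ⟨hmap, by rw [hsinv]; exact hmap, hlm, by rw [hsinv]; exact hlm⟩
      | one =>
        refine ⟨fun x hx => hx, fun x hx => by simpa using hx, ?_, ?_⟩
        · show (1 : E ≃ₗᵢ[ℝ] E) lam - lam ∈ _
          rw [show (1 : E ≃ₗᵢ[ℝ] E) lam = lam from rfl, sub_self]
          exact zero_mem _
        · rw [inv_one]
          show (1 : E ≃ₗᵢ[ℝ] E) lam - lam ∈ _
          rw [show (1 : E ≃ₗᵢ[ℝ] E) lam = lam from rfl, sub_self]
          exact zero_mem _
      | mul x y hx hy ihx ihy =>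
        refine ⟨fun z hz => ihx.1 _ (ihy.1 z hz), ?_, ?_, ?_⟩
        · intro z hz
          rw [mul_inv_rev]
          exact ihy.2.1 _ (ihx.2.1 z hz)
        · have h1 : (x*y) lam - lam = x (y lam - lam) + (x lam - lam) := by
            show x (y lam) - lam = x (y lam - lam) + (x lam - lam)
            rw [map_sub]
            abel
          rw [h1]
          exact add_mem (ihx.1 _ ihy.2.2.1) ihx.2.2.1
        · have h1 : (x*y)⁻¹ lam - lam = y⁻¹ (x⁻¹ lam - lam) + (y⁻¹ lam - lam) := by
            rw [mul_inv_rev]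
            show y⁻¹ (x⁻¹ lam) - lam = y⁻¹ (x⁻¹ lam - lam) + (y⁻¹ lam - lam)
            rw [map_sub]
            abel
          rw [h1]
          exact add_mem (ihy.2.1 _ ihx.2.2.2) ihy.2.2.2
      | inv x hx ih =>
        refine ⟨ih.2.1, ?_, ih.2.2.2, ?_⟩
        · intro z hz
          rw [inv_inv]
          exact ih.1 z hz
        · rw [inv_inv]
          exact ih.2.2.1
    exact (main g hg).2.2.1
  have hxlam : (hfin.toFinset.card : ℝ)⁻¹ • ∑ μ ∈ hfin.toFinset, μ - lam
      ∈ Submodule.span ℝ (α '' K) := by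
    have h1 : (hfin.toFinset.card : ℝ)⁻¹ • ∑ μ ∈ hfin.toFinset, μ - lam
        = (hfin.toFinset.card : ℝ)⁻¹ • ∑ μ ∈ hfin.toFinset, (μ - lam) := by
      rw [Finset.sum_sub_distrib, Finset.sum_const, smul_sub]
      congr 1
      rw [← Nat.cast_smul_eq_nsmul ℝ, smul_smul, inv_mul_cancel₀ (ne_of_gt hScard), one_smul]
    rw [h1]
    exact Submodule.smul_mem _ _ (Submodule.sum_mem _ hScoset)
  have hylam : (horb.toFinset.card : ℝ)⁻¹ • ∑ μ ∈ horb.toFinset, μ - lam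
      ∈ Submodule.span ℝ (α '' K) := by
    have h1 : (horb.toFinset.card : ℝ)⁻¹ • ∑ μ ∈ horb.toFinset, μ - lam
        = (horb.toFinset.card : ℝ)⁻¹ • ∑ μ ∈ horb.toFinset, (μ - lam) := by
      rw [Finset.sum_sub_distrib, Finset.sum_const, smul_sub]
      congr 1
      rw [← Nat.cast_smul_eq_nsmul ℝ, smul_smul, inv_mul_cancel₀ (ne_of_gt hOcard), one_smul]
    rw [h1]
    exact Submodule.smul_mem _ _ (Submodule.sum_mem _ hOcoset)
  have hdmem : (hfin.toFinset.card : ℝ)⁻¹ • ∑ μ ∈ hfin.toFinset, μ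
      - (horb.toFinset.card : ℝ)⁻¹ • ∑ μ ∈ horb.toFinset, μ
      ∈ Submodule.span ℝ (α '' K) := by
    have h1 : (hfin.toFinset.card : ℝ)⁻¹ • ∑ μ ∈ hfin.toFinset, μ
        - (horb.toFinset.card : ℝ)⁻¹ • ∑ μ ∈ horb.toFinset, μ
        = ((hfin.toFinset.card : ℝ)⁻¹ • ∑ μ ∈ hfin.toFinset, μ - lam)
          - ((horb.toFinset.card : ℝ)⁻¹ • ∑ μ ∈ horb.toFinset, μ - lam) := by abel
    rw [h1]
    exact sub_mem hxlam hylam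
  have hperp : ∀ z, z ∈ Submodule.span ℝ (α '' K) →
      ⟪z, (hfin.toFinset.card : ℝ)⁻¹ • ∑ μ ∈ hfin.toFinset, μ
        - (horb.toFinset.card : ℝ)⁻¹ • ∑ μ ∈ horb.toFinset, μ⟫ = 0 := by
    intro z hz
    induction hz using Submodule.span_induction with
    | mem a ha =>
      obtain ⟨i, hi, rfl⟩ := ha
      rw [inner_sub_right, real_inner_smul_right, real_inner_smul_right,
        himgS i hi, himgO i hi]
      ring
    | zero => simp
    | add a b _ _ iha ihb => rw [inner_add_left, iha, ihb]; ring
    | smul r a _ ih => rw [real_inner_smul_left, ih]; ring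
  have h0 := hperp _ hdmem
  rw [inner_self_eq_zero] at h0
  exact sub_eq_zero.mp h0
end

section
/- Let V^λ be a highest weight module over a complex semisimple Lie algebra. For i ∈ I, the maximum set (I \ {i})_max associated to the subset I \ {i} equals J(V^λ) \ {i} if i ∈ I_min ⊔ (I \ J(V^λ)), and equals J(V^λ) otherwise (i.e. if i ∈ J(V^λ) \ I_min). Consequently the coordinate sets {wt_{I\{i}} V^λ : i ∈ I_min ⊔ (I \ J(V^λ))} are pairwise distinct proper subsets of wt V^λ, while wt_{I\{i}} V^λ = wt V^λ for every i ∈ J(V^λ) \ I_min. -/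
open scoped RealInnerProductSpace

/-- for a highest weight module with integrability set `JV = J(V^λ)`, and
with `J ↦ (mins J, maxs J)` the extremal sets of Theorem A, one has
`(I \ {i})_max = JV \ {i}` for `i ∈ I_min ⊔ (I \ JV)` and `(I \ {i})_max = JV` otherwise;
the coordinate sets `wt_{I \ {i}} V^λ`, `i ∈ I_min ⊔ (I \ JV)`, are pairwise distinct
proper subsets of `wt V^λ`, while `wt_{I \ {i}} V^λ = wt V^λ` for `i ∈ JV \ I_min`. -/
theorem coordinate_faces {ι E : Type*} [AddCommGroup E]
    (α : ι → E) (lam : E) (wt : Set E) (JV : Set ι)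
    (mins maxs : Set ι → Set ι)
    (hlam : lam ∈ wt)
    (hwt : ∀ μ ∈ wt, lam - μ ∈ nnCone α Set.univ)
    (hbounds : ∀ J : Set ι, mins J ⊆ maxs J ∧ maxs J ⊆ JV)
    (hchar : ∀ J J' : Set ι,
      wtJ α lam wt J' = wtJ α lam wt J ↔
        (J' \ JV = J \ JV ∧ mins J ⊆ J' ∩ JV ∧ J' ∩ JV ⊆ maxs J))
    (hImax : maxs Set.univ = JV) :
    (∀ i : ι,
      (i ∈ mins Set.univ ∪ (Set.univ \ JV) →
        maxs (Set.univ \ {i}) = JV \ {i}) ∧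
      (i ∈ JV \ mins Set.univ → maxs (Set.univ \ {i}) = JV)) ∧
    (∀ i ∈ mins Set.univ ∪ (Set.univ \ JV), wtJ α lam wt (Set.univ \ {i}) ⊂ wt) ∧
    (∀ i ∈ mins Set.univ ∪ (Set.univ \ JV), ∀ j ∈ mins Set.univ ∪ (Set.univ \ JV),
      i ≠ j → wtJ α lam wt (Set.univ \ {i}) ≠ wtJ α lam wt (Set.univ \ {j})) ∧
    (∀ i ∈ JV \ mins Set.univ, wtJ α lam wt (Set.univ \ {i}) = wt) := by
  have hwtu : wtJ α lam wt Set.univ = wt := by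
    ext μ
    exact ⟨fun h => h.1, fun h => ⟨h, hwt μ h⟩⟩
  -- For i ∈ JV \ mins univ, the wtJ sets agree with the full one.
  have heq2 : ∀ i ∈ JV \ mins Set.univ,
      wtJ α lam wt (Set.univ \ {i}) = wtJ α lam wt Set.univ := by
    intro i hi
    refine (hchar Set.univ (Set.univ \ {i})).mpr ⟨?_, ?_, ?_⟩
    · ext x
      constructor
      · rintro ⟨⟨-, -⟩, hx2⟩; exact ⟨trivial, hx2⟩
      · rintro ⟨-, hx2⟩
        exact ⟨⟨trivial, fun h => hx2 (h ▸ hi.1)⟩, hx2⟩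
    · intro x hx
      have hxJ : x ∈ JV := hImax ▸ (hbounds Set.univ).1 hx
      exact ⟨⟨trivial, fun h => hi.2 (h ▸ hx)⟩, hxJ⟩
    · intro x hx
      exact hImax ▸ hx.2
  have hmax2 : ∀ i ∈ JV \ mins Set.univ, maxs (Set.univ \ {i}) = JV := by
    intro i hi
    have h := ((hchar (Set.univ \ {i}) Set.univ).mp (heq2 i hi).symm).2.2
    refine Set.Subset.antisymm (hbounds _).2 (fun x hx => h ⟨trivial, hx⟩)
  have hmax1 : ∀ i, i ∈ mins Set.univ ∪ (Set.univ \ JV) →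
      maxs (Set.univ \ {i}) = JV \ {i} := by
    intro i hi
    have hrefl := (hchar (Set.univ \ {i}) (Set.univ \ {i})).mp rfl
    have hsub : JV \ {i} ⊆ maxs (Set.univ \ {i}) :=
      fun j hj => hrefl.2.2 ⟨⟨trivial, hj.2⟩, hj.1⟩
    refine Set.Subset.antisymm (fun j hj => ?_) hsub
    have hjJV : j ∈ JV := (hbounds _).2 hj
    refine ⟨hjJV, fun hji => ?_⟩
    rw [Set.mem_singleton_iff] at hji
    subst hji
    rcases hi with hi | hi
    · -- j ∈ mins univ, j ∈ JV, j ∈ maxs (univ \ {j}) : contradiction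
      have heq : wtJ α lam wt Set.univ = wtJ α lam wt (Set.univ \ {j}) := by
        refine (hchar (Set.univ \ {j}) Set.univ).mpr ⟨?_, ?_, ?_⟩
        · ext x
          constructor
          · rintro ⟨-, hx2⟩
            exact ⟨⟨trivial, fun h => hx2 (h ▸ hjJV)⟩, hx2⟩
          · rintro ⟨⟨-, -⟩, hx2⟩; exact ⟨trivial, hx2⟩
        · intro x hx
          exact ⟨trivial, (hbounds _).2 ((hbounds _).1 hx)⟩
        · intro x hx
          by_cases hxj : x = j
          · exact hxj ▸ hj
          · exact hsub ⟨hx.2, hxj⟩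
      have h2 := ((hchar Set.univ (Set.univ \ {j})).mp heq.symm).2.1 hi
      exact h2.1.2 rfl
    · exact hi.2 hjJV
  refine ⟨fun i => ⟨hmax1 i, fun hi => hmax2 i hi⟩, ?_, ?_, ?_⟩
  · intro i hi
    refine ⟨fun μ h => h.1, fun hcon => ?_⟩
    have heq : wtJ α lam wt (Set.univ \ {i}) = wtJ α lam wt Set.univ := by
      rw [hwtu]
      exact Set.Subset.antisymm (fun μ h => h.1) hcon
    have h := (hchar Set.univ (Set.univ \ {i})).mp heq
    rcases hi with hi | hi
    · exact (h.2.1 hi).1.2 rfl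
    · have : i ∈ (Set.univ \ {i}) \ JV := h.1 ▸ hi
      exact this.1.2 rfl
  · intro i hi j hj hij hcon
    have h := (hchar (Set.univ \ {j}) (Set.univ \ {i})).mp hcon
    rcases hj with hj' | hj'
    · have hjJV : j ∈ JV := hImax ▸ (hbounds Set.univ).1 hj'
      have : j ∈ maxs (Set.univ \ {j}) :=
        h.2.2 ⟨⟨trivial, fun h => hij (h.symm)⟩, hjJV⟩
      rw [hmax1 j (Or.inl hj')] at this
      exact this.2 rfl
    · have : j ∈ (Set.univ \ {j}) \ JV :=
        h.1 ▸ ⟨⟨trivial, fun h => hij h.symm⟩, hj'.2⟩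
      exact this.1.2 rfl
  · intro i hi
    rw [heq2 i hi, hwtu]
end

section
/- Let g = sl_3 with simple roots α_1, α_2 and fundamental weights ω_1, ω_2, and let λ = (c+1)ω_2 for some c ∈ Z_{≥0}. Then in the simple finite-dimensional module L(λ): wt_{{1}} L(λ) = {λ}, and there are strict inclusions wt_{{1}} L(λ) ⊊ wt_{{2}} L(λ) ⊊ wt_{{1,2}} L(λ) = wt L(λ). In particular, wt_{{1}} L(λ) ⊆ wt_{{2}} L(λ) even though wt_{{2}} L(λ) ≠ wt_{{1,2}} L(λ). -/
open scoped RealInnerProductSpace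

lemma eig_indep {V ι : Type*} [DecidableEq ι] [AddCommGroup V] [Module ℂ V]
    (H : V →ₗ[ℂ] V) (e : ι → ℂ)
    (T : Finset ι) (u : ι → V) (hinj : Set.InjOn e T)
    (hu : ∀ μ ∈ T, H (u μ) = e μ • u μ) (hsum : ∑ μ ∈ T, u μ = 0) :
    ∀ μ ∈ T, u μ = 0 := by
  induction T using Finset.induction_on generalizing u with
  | empty => simp
  | @insert ν T hν ih =>
    have hsub : (T : Set ι) ⊆ (insert ν T : Finset ι) := by
      intro x hx; simp only [Finset.coe_insert, Set.mem_insert_iff, Finset.mem_coe] at *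
      exact Or.inr hx
    have h1 : ∑ μ ∈ insert ν T, e μ • u μ = 0 := by
      have := congrArg H hsum
      rw [map_sum, map_zero] at this
      rw [← this]
      exact Finset.sum_congr rfl fun μ hμ => (hu μ hμ).symm
    have h2 : ∑ μ ∈ insert ν T, (e μ - e ν) • u μ = 0 := by
      have heq : ∑ μ ∈ insert ν T, (e μ - e ν) • u μ
          = ∑ μ ∈ insert ν T, e μ • u μ - e ν • ∑ μ ∈ insert ν T, u μ := by
        rw [Finset.smul_sum, ← Finset.sum_sub_distrib]
        exact Finset.sum_congr rfl fun μ _ => by rw [sub_smul]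
      rw [heq, h1, hsum, smul_zero, sub_zero]
    rw [Finset.sum_insert hν, sub_self, zero_smul, zero_add] at h2
    have key : ∀ μ ∈ T, (e μ - e ν) • u μ = 0 := by
      apply ih (u := fun μ => (e μ - e ν) • u μ)
      · exact hinj.mono hsub
      · intro μ hμ
        rw [map_smul, hu μ (Finset.mem_insert_of_mem hμ), smul_smul, smul_smul, mul_comm]
      · exact h2
    have key2 : ∀ μ ∈ T, u μ = 0 := by
      intro μ hμ
      have hne : e μ ≠ e ν := fun h => hν (by
        have : μ = ν := hinj (hsub hμ) (by simp) h
        exact this ▸ hμ)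
      rcases smul_eq_zero.mp (key μ hμ) with h | h
      · exact absurd (sub_eq_zero.mp h) hne
      · exact h
    intro μ hμ
    rcases Finset.mem_insert.mp hμ with rfl | hμT
    · have hs : u μ + ∑ x ∈ T, u x = 0 := by rw [← Finset.sum_insert hν]; exact hsum
      rw [Finset.sum_eq_zero key2, add_zero] at hs
      exact hs
    · exact key2 μ hμT

lemma choose_r {ι : Type*} (T : Finset ι) (k : ι → ℂ × ℂ) (hk : Set.InjOn k T) :
    ∃ r : ℂ, Set.InjOn (fun μ => (k μ).1 + r * (k μ).2) T := by
  obtain ⟨r, hr⟩ := Infinite.exists_notMem_finset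
    ((T ×ˢ T).image fun p => ((k p.2).1 - (k p.1).1) / ((k p.1).2 - (k p.2).2))
  refine ⟨r, fun μ hμ μ' hμ' h => ?_⟩
  simp only at h
  by_cases h2 : (k μ).2 = (k μ').2
  · have h1 : (k μ).1 = (k μ').1 := by
      rw [h2] at h; exact add_right_cancel h
    exact hk hμ hμ' (Prod.ext h1 h2)
  · exfalso
    apply hr
    rw [Finset.mem_image]
    refine ⟨(μ, μ'), Finset.mem_product.mpr ⟨hμ, hμ'⟩, ?_⟩
    have hne : (k μ).2 - (k μ').2 ≠ 0 := sub_ne_zero.mpr h2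
    field_simp
    linear_combination -h

lemma pair_zero {E : Type*} [AddCommGroup E] [Module ℝ E] {α : Fin 2 → E}
    (hα : LinearIndependent ℝ α) {x y : ℝ} (h : x • α 0 + y • α 1 = 0) :
    x = 0 ∧ y = 0 := by
  have := Fintype.linearIndependent_iff.mp hα ![x, y] (by
    rw [Fin.sum_univ_two]; exact h)
  exact ⟨this 0, this 1⟩

lemma mem_nnCone_single {ι E : Type*} [AddCommMonoid E] (α : ι → E) (i : ι) (β : E) :
    β ∈ nnCone α {i} ↔ ∃ a : ℕ, β = a • α i := by
  rw [nnCone, Set.image_singleton, AddSubmonoid.mem_closure_singleton]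
  exact ⟨fun ⟨n, h⟩ => ⟨n, h.symm⟩, fun ⟨n, h⟩ => ⟨n, h.symm⟩⟩

lemma mem_nnCone_pair {ι E : Type*} [AddCommMonoid E] (α : ι → E) (i j : ι) (β : E) :
    β ∈ nnCone α {i, j} ↔ ∃ a b : ℕ, β = a • α i + b • α j := by
  constructor
  · intro h
    induction h using AddSubmonoid.closure_induction with
    | mem x hx =>
      rcases hx with ⟨k, hk, rfl⟩
      rcases hk with rfl | rfl
      · exact ⟨1, 0, by simp⟩
      · exact ⟨0, 1, by simp⟩
    | zero => exact ⟨0, 0, by simp⟩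
    | add x y _ _ hx hy =>
      obtain ⟨a, b, rfl⟩ := hx
      obtain ⟨a', b', rfl⟩ := hy
      exact ⟨a + a', b + b', by rw [add_smul, add_smul]; abel⟩
  · rintro ⟨a, b, rfl⟩
    exact add_mem
      (AddSubmonoid.nsmul_mem _ (AddSubmonoid.subset_closure (Set.mem_image_of_mem α (by simp))) a)
      (AddSubmonoid.nsmul_mem _
        (AddSubmonoid.subset_closure (Set.mem_image_of_mem α (by simp : j ∈ ({i, j} : Set ι)))) b)

/-- for `g = sl₃` (simple roots `α 0 = α₁, α 1 = α₂`, fundamental weights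
`ω 0 = ω₁, ω 1 = ω₂`) and `λ = (c+1)ω₂` with `c ∈ ℤ_{≥0}`, in the finite-dimensional
simple module `L(λ)` one has `wt_{{1}} L(λ) = {λ}` and the strict chain
`wt_{{1}} L(λ) ⊊ wt_{{2}} L(λ) ⊊ wt_{{1,2}} L(λ) = wt L(λ)`; in particular
`wt_{{1}} ⊆ wt_{{2}}` even though `wt_{{2}} ≠ wt_{{1,2}}`. -/
theorem sl3_strict_chain {E V : Type*} [NormedAddCommGroup E] [InnerProductSpace ℝ E]
    [AddCommGroup V] [Module ℂ V]
    (α ω : Fin 2 → E) (c : ℕ)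
    (hα : LinearIndependent ℝ α)
    (hcartan : ⟪α 0, α 0⟫ = 2 ∧ ⟪α 1, α 1⟫ = 2 ∧ ⟪α 0, α 1⟫ = -1)
    (hω : ∀ i j : Fin 2, ⟪ω i, α j⟫ = if i = j then ⟪α j, α j⟫ / 2 else 0)
    (lam : E) (hlam : lam = ((c : ℝ) + 1) • ω 1)
    (wtSp : E → Submodule ℂ V) (F Ep : Fin 2 → V →ₗ[ℂ] V) (vlam : V)
    (κ : E → Fin 2 → ℂ)
    (hκ : ∀ (μ : E) (i : Fin 2), κ μ i = ((2 * ⟪μ, α i⟫ / ⟪α i, α i⟫ : ℝ) : ℂ))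
    (hHW : IsHWModule α lam wtSp F Ep vlam κ)
    (hsimple : IsModSimple F Ep Set.univ (⊤ : Submodule ℂ V))
    (hint : ∀ i : Fin 2, i ∈ integrable F vlam κ lam) :
    wtJ α lam (wtSet wtSp) {0} = {lam} ∧
    wtJ α lam (wtSet wtSp) {0} ⊂ wtJ α lam (wtSet wtSp) {1} ∧
    wtJ α lam (wtSet wtSp) {1} ⊂ wtJ α lam (wtSet wtSp) {0, 1} ∧
    wtJ α lam (wtSet wtSp) {0, 1} = wtSet wtSp ∧
    (wtJ α lam (wtSet wtSp) {0} ⊆ wtJ α lam (wtSet wtSp) {1} ∧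
      wtJ α lam (wtSet wtSp) {1} ≠ wtJ α lam (wtSet wtSp) {0, 1}) := by
  classical
  obtain ⟨h00, h11, h01⟩ := hcartan
  have h10 : ⟪α 1, α 0⟫ = -1 := by rw [real_inner_comm]; exact h01
  have hsd : ∀ i : Fin 2, ⟪α i, α i⟫ = 2 := by
    intro i; fin_cases i <;> assumption
  have hκ' : ∀ (μ : E) (i : Fin 2), κ μ i = ((⟪μ, α i⟫ : ℝ) : ℂ) := by
    intro μ i
    rw [hκ, hsd i]
    norm_num
  have hlam0 : ⟪lam, α 0⟫ = 0 := by
    rw [hlam, real_inner_smul_left, hω 1 0]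
    simp
  have hlam1 : ⟪lam, α 1⟫ = (c : ℝ) + 1 := by
    rw [hlam, real_inner_smul_left, hω 1 1, if_pos rfl, h11]
    ring
  have hκlam0 : κ lam 0 = 0 := by rw [hκ', hlam0]; simp
  have hκlam1 : κ lam 1 = (c : ℂ) + 1 := by rw [hκ', hlam1]; push_cast; ring
  -- F 0 kills the highest weight vector
  have hF0 : F 0 vlam = 0 := by
    obtain ⟨n, hn, hFn⟩ := hint 0
    have hn0 : n = 0 := by
      rw [hκlam0] at hn
      exact_mod_cast hn.symm
    subst hn0
    rwa [pow_one] at hFn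
  have hc1 : ((c : ℂ) + 1) ≠ 0 := by
    have : ((c + 1 : ℕ) : ℂ) ≠ 0 := Nat.cast_ne_zero.mpr (Nat.succ_ne_zero c)
    push_cast at this; exact this
  have hF1 : F 1 vlam ≠ 0 := by
    intro h
    have hsl := hHW.sl2 1 lam vlam hHW.vlam_mem
    rw [h, map_zero, hHW.hw 1, map_zero, zero_add, hκlam1] at hsl
    exact hHW.vlam_ne (by
      rcases smul_eq_zero.mp hsl.symm with h' | h'
      · exact absurd h' hc1
      · exact h')
  have hwt1 : F 1 vlam ∈ wtSp (lam - α 1) := hHW.F_wt 1 lam vlam hHW.vlam_mem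
  have hκl1 : κ (lam - α 1) 0 = 1 := by
    rw [hκ', inner_sub_left, hlam0, h10]; norm_num
  have hF01 : F 0 (F 1 vlam) ≠ 0 := by
    intro h
    have hsl := hHW.sl2 0 (lam - α 1) (F 1 vlam) hwt1
    have hz : Ep 0 (F 1 vlam) = 0 := by
      rw [hHW.offdiag 0 1 (by decide), hHW.hw 0, map_zero]
    rw [h, map_zero, hz, map_zero, zero_add, hκl1, one_smul] at hsl
    exact hF1 hsl.symm
  have hwt01 : F 0 (F 1 vlam) ∈ wtSp (lam - α 1 - α 0) := hHW.F_wt 0 _ _ hwt1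
  -- monomial weights
  have hmono : ∀ l : List (Fin 2), monom F vlam l ∈ wtSp (lam - (l.map α).sum) := by
    intro l
    induction l with
    | nil => simpa [monom] using hHW.vlam_mem
    | cons i l ih =>
      have h := hHW.F_wt i _ _ ih
      have heq : lam - ((i :: l).map α).sum = lam - (l.map α).sum - α i := by
        simp only [List.map_cons, List.sum_cons]; abel
      rw [heq]
      exact h
  have hcount : ∀ l : List (Fin 2), (l.map α).sum = l.count 0 • α 0 + l.count 1 • α 1 := by
    intro l
    induction l with
    | nil => simp
    | cons i l ih =>
      rw [List.map_cons, List.sum_cons, ih]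
      have hi : i = 0 ∨ i = 1 := by omega
      rcases hi with rfl | rfl
      · rw [List.count_cons_self, List.count_cons_of_ne (by decide), succ_nsmul]
        abel
      · rw [List.count_cons_self, List.count_cons_of_ne (by decide), succ_nsmul]
        abel
  have hzero : ∀ l : List (Fin 2), l ≠ [] → (1 : Fin 2) ∉ l → monom F vlam l = 0 := by
    intro l
    induction l with
    | nil => intro h _; exact absurd rfl h
    | cons i l ih =>
      intro _ hmem
      have hi : i = 0 := by
        have hne : i ≠ 1 := fun h => hmem (h ▸ (List.mem_cons_self : i ∈ i :: l))
        omega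
      subst hi
      rcases eq_or_ne l [] with rfl | hl
      · exact hF0
      · show F 0 (monom F vlam l) = 0
        rw [ih hl (fun h => hmem (List.mem_cons_of_mem _ h)), map_zero]
  -- eigen operator
  have hH : ∀ (r : ℂ) (μ : E), ∀ v ∈ wtSp μ,
      ((Ep 0 ∘ₗ F 0 - F 0 ∘ₗ Ep 0) + r • (Ep 1 ∘ₗ F 1 - F 1 ∘ₗ Ep 1)) v
        = (κ μ 0 + r * κ μ 1) • v := by
    intro r μ v hv
    have e0 := hHW.sl2 0 μ v hv
    have e1 := hHW.sl2 1 μ v hv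
    simp only [LinearMap.add_apply, LinearMap.smul_apply, LinearMap.sub_apply,
      LinearMap.comp_apply, e0, e1]
    rw [add_sub_cancel_left, add_sub_cancel_left, add_smul, mul_smul]
  -- grid and injectivity of κ on grid points
  have hinner0 : ∀ (a b : ℕ), ⟪lam - (a • α 0 + b • α 1), α 0⟫ = -2 * a + b := by
    intro a b
    rw [inner_sub_left, inner_add_left, ← Nat.cast_smul_eq_nsmul ℝ a (α 0),
      ← Nat.cast_smul_eq_nsmul ℝ b (α 1), real_inner_smul_left, real_inner_smul_left,
      hlam0, h00, h10]
    ring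
  have hinner1 : ∀ (a b : ℕ), ⟪lam - (a • α 0 + b • α 1), α 1⟫ = (c : ℝ) + 1 + a - 2 * b := by
    intro a b
    rw [inner_sub_left, inner_add_left, ← Nat.cast_smul_eq_nsmul ℝ a (α 0),
      ← Nat.cast_smul_eq_nsmul ℝ b (α 1), real_inner_smul_left, real_inner_smul_left,
      hlam1, h01, h11]
    ring
  have hgridinj : ∀ μ μ' : E, (∃ a b : ℕ, μ = lam - (a • α 0 + b • α 1)) →
      (∃ a b : ℕ, μ' = lam - (a • α 0 + b • α 1)) →
      κ μ 0 = κ μ' 0 → κ μ 1 = κ μ' 1 → μ = μ' := by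
    rintro μ μ' ⟨a, b, rfl⟩ ⟨a', b', rfl⟩ hk0 hk1
    rw [hκ', hκ'] at hk0 hk1
    have h0' := Complex.ofReal_inj.mp hk0
    have h1' := Complex.ofReal_inj.mp hk1
    rw [hinner0 a b, hinner0 a' b'] at h0'
    rw [hinner1 a b, hinner1 a' b'] at h1'
    have ha : (a : ℝ) = a' := by linarith
    have hb : (b : ℝ) = b' := by linarith
    have ha' : a = a' := Nat.cast_injective ha
    have hb' : b = b' := Nat.cast_injective hb
    rw [ha', hb']
  -- decomposition of span elements by weight
  set S : E → Set V := fun μ => {w : V | ∃ l : List (Fin 2), monom F vlam l = w ∧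
    lam - (l.map α).sum = μ} with hS
  have hQ : ∀ v : V, ∃ (T : Finset E) (u : E → V),
      (∀ μ ∈ T, u μ ∈ wtSp μ ∧ u μ ∈ Submodule.span ℂ (S μ) ∧
        (∃ a b : ℕ, μ = lam - (a • α 0 + b • α 1))) ∧ v = ∑ μ ∈ T, u μ := by
    intro v
    have hv : v ∈ Submodule.span ℂ (Set.range (monom F vlam)) := by
      rw [hHW.gen]; trivial
    induction hv using Submodule.span_induction with
    | mem w hw =>
      obtain ⟨l, rfl⟩ := hw
      refine ⟨{lam - (l.map α).sum}, fun _ => monom F vlam l, ?_, by simp⟩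
      intro μ hμ
      rw [Finset.mem_singleton] at hμ
      subst hμ
      exact ⟨hmono l, Submodule.subset_span ⟨l, rfl, rfl⟩,
        ⟨l.count 0, l.count 1, by rw [hcount l]⟩⟩
    | zero => exact ⟨∅, fun _ => 0, by simp, by simp⟩
    | add x y _ _ hx hy =>
      obtain ⟨T₁, u₁, h₁, rfl⟩ := hx
      obtain ⟨T₂, u₂, h₂, rfl⟩ := hy
      refine ⟨T₁ ∪ T₂,
        fun μ => (if μ ∈ T₁ then u₁ μ else 0) + (if μ ∈ T₂ then u₂ μ else 0), ?_, ?_⟩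
      · intro μ hμ
        have m1 : (if μ ∈ T₁ then u₁ μ else 0) ∈ wtSp μ := by
          split
          · exact (h₁ μ ‹_›).1
          · exact zero_mem _
        have m2 : (if μ ∈ T₂ then u₂ μ else 0) ∈ wtSp μ := by
          split
          · exact (h₂ μ ‹_›).1
          · exact zero_mem _
        have s1 : (if μ ∈ T₁ then u₁ μ else 0) ∈ Submodule.span ℂ (S μ) := by
          split
          · exact (h₁ μ ‹_›).2.1
          · exact zero_mem _
        have s2 : (if μ ∈ T₂ then u₂ μ else 0) ∈ Submodule.span ℂ (S μ) := by
          split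
          · exact (h₂ μ ‹_›).2.1
          · exact zero_mem _
        refine ⟨add_mem m1 m2, add_mem s1 s2, ?_⟩
        rcases Finset.mem_union.mp hμ with h | h
        · exact (h₁ μ h).2.2
        · exact (h₂ μ h).2.2
      · rw [Finset.sum_add_distrib]
        congr 1
        · rw [Finset.sum_ite_mem, Finset.union_inter_cancel_left]
        · rw [Finset.sum_ite_mem, Finset.union_inter_cancel_right]
    | smul a x _ hx =>
      obtain ⟨T, u, h, rfl⟩ := hx
      exact ⟨T, fun μ => a • u μ, fun μ hμ =>
        ⟨Submodule.smul_mem _ _ (h μ hμ).1, Submodule.smul_mem _ _ (h μ hμ).2.1, (h μ hμ).2.2⟩,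
        by rw [Finset.smul_sum]⟩
  -- main characterization of weights
  have hchar : ∀ ν : E, wtSp ν ≠ ⊥ →
      ∃ l : List (Fin 2), monom F vlam l ≠ 0 ∧ lam - (l.map α).sum = ν := by
    intro ν hν
    obtain ⟨v, hvmem, hv0⟩ := (Submodule.ne_bot_iff _).mp hν
    obtain ⟨T, u, hu, hveq⟩ := hQ v
    by_cases hB : ∃ μ₀ ∈ T, κ μ₀ 0 = κ ν 0 ∧ κ μ₀ 1 = κ ν 1
    · obtain ⟨μ₀, hμ₀T, hk0, hk1⟩ := hB
      have hinjT : Set.InjOn (fun μ => (κ μ 0, κ μ 1)) T := fun μ hμ μ' hμ' h =>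
        hgridinj μ μ' (hu μ hμ).2.2 (hu μ' hμ').2.2
          (congrArg Prod.fst h) (congrArg Prod.snd h)
      obtain ⟨r, hr⟩ := choose_r T (fun μ => (κ μ 0, κ μ 1)) hinjT
      have hall := eig_indep ((Ep 0 ∘ₗ F 0 - F 0 ∘ₗ Ep 0) + r • (Ep 1 ∘ₗ F 1 - F 1 ∘ₗ Ep 1))
        (fun μ => κ μ 0 + r * κ μ 1) T
        (fun μ => u μ - (if μ = μ₀ then v else 0)) hr
        (by
          intro μ hμ
          beta_reduce
          have h1 := hH r μ (u μ) (hu μ hμ).1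
          by_cases hμν : μ = μ₀
          · subst hμν
            have h2 : ((Ep 0 ∘ₗ F 0 - F 0 ∘ₗ Ep 0) + r • (Ep 1 ∘ₗ F 1 - F 1 ∘ₗ Ep 1)) v
                = (κ μ 0 + r * κ μ 1) • v := by
              rw [hH r ν v hvmem, hk0, hk1]
            rw [show (if μ = μ then v else (0:V)) = v from if_pos rfl]
            rw [map_sub, h1, h2, smul_sub]
          · simp only [if_neg hμν, sub_zero]
            exact h1)
        (by
          rw [Finset.sum_sub_distrib]
          have hsv : ∑ μ ∈ T, (if μ = μ₀ then v else 0) = v := by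
            rw [Finset.sum_eq_single_of_mem μ₀ hμ₀T (fun b _ hb => if_neg hb)]
            exact if_pos rfl
          rw [hsv, ← hveq, sub_self])
      have h0 := hall μ₀ hμ₀T
      beta_reduce at h0
      rw [show (if μ₀ = μ₀ then v else (0:V)) = v from if_pos rfl, sub_eq_zero] at h0
      have hvw : v ∈ wtSp μ₀ := by rw [← h0]; exact (hu μ₀ hμ₀T).1
      have hνμ : ν = μ₀ := by
        by_contra hne
        exact hv0 (hHW.indep ν μ₀ hne v hvmem hvw)
      subst hνμ
      have hvspan : v ∈ Submodule.span ℂ (S ν) := by rw [← h0]; exact (hu ν hμ₀T).2.1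
      by_contra hcon
      push_neg at hcon
      have hSsub : S ν ⊆ {0} := by
        rintro w ⟨l, rfl, hl⟩
        by_contra hw0
        exact (hcon l (by simpa using hw0)) hl
      have hle : Submodule.span ℂ (S ν) ≤ ⊥ := by
        have := Submodule.span_mono (R := ℂ) hSsub
        rwa [Submodule.span_zero_singleton] at this
      exact hv0 (Submodule.mem_bot ℂ |>.mp (hle hvspan))
    · push_neg at hB
      have hνT : ν ∉ T := fun h => hB ν h rfl rfl
      have hinj' : Set.InjOn (fun μ => (κ μ 0, κ μ 1)) (insert ν T : Finset E) := by
        intro μ hμ μ' hμ' h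
        have hk0 := congrArg Prod.fst h
        have hk1 := congrArg Prod.snd h
        simp only at hk0 hk1
        simp only [Finset.coe_insert, Set.mem_insert_iff, Finset.mem_coe] at hμ hμ'
        rcases hμ with rfl | hμ <;> rcases hμ' with rfl | hμ'
        · rfl
        · exact absurd hk1.symm (hB μ' hμ' hk0.symm)
        · exact absurd hk1 (hB μ hμ hk0)
        · exact hgridinj μ μ' (hu μ hμ).2.2 (hu μ' hμ').2.2 hk0 hk1
      obtain ⟨r, hr⟩ := choose_r (insert ν T) (fun μ => (κ μ 0, κ μ 1)) hinj'
      have hall := eig_indep ((Ep 0 ∘ₗ F 0 - F 0 ∘ₗ Ep 0) + r • (Ep 1 ∘ₗ F 1 - F 1 ∘ₗ Ep 1))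
        (fun μ => κ μ 0 + r * κ μ 1) (insert ν T)
        (fun μ => if μ = ν then v else -u μ) hr
        (by
          intro μ hμ
          beta_reduce
          by_cases hμν : μ = ν
          · subst hμν
            rw [show (if μ = μ then v else -u μ) = v from if_pos rfl]
            exact hH r μ v hvmem
          · have hμT : μ ∈ T := by
              rcases Finset.mem_insert.mp hμ with h | h
              · exact absurd h hμν
              · exact h
            simp only [if_neg hμν]
            rw [map_neg, hH r μ (u μ) (hu μ hμT).1, smul_neg])
        (by
          rw [Finset.sum_insert hνT,
            show (if ν = ν then v else -u ν) = v from if_pos rfl]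
          have hrest : ∑ μ ∈ T, (if μ = ν then v else -u μ) = -∑ μ ∈ T, u μ := by
            rw [← Finset.sum_neg_distrib]
            refine Finset.sum_congr rfl fun μ hμ => ?_
            exact if_neg (fun h : μ = ν => hνT (h ▸ hμ))
          rw [hrest, ← hveq, add_neg_cancel])
      have hfin := hall ν (Finset.mem_insert_self ν T)
      beta_reduce at hfin
      rw [show (if ν = ν then v else -u ν) = v from if_pos rfl] at hfin
      exact absurd hfin hv0
  -- basic weight memberships
  have hlamwt : lam ∈ wtSet wtSp :=
    (Submodule.ne_bot_iff _).mpr ⟨vlam, hHW.vlam_mem, hHW.vlam_ne⟩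
  have hα1ne : α 1 ≠ 0 := by
    intro h
    rw [h, inner_zero_left] at h11
    norm_num at h11
  -- Part 1
  have part1 : wtJ α lam (wtSet wtSp) {0} = {lam} := by
    ext μ
    constructor
    · rintro ⟨hμwt, hcone⟩
      obtain ⟨a, ha⟩ := (mem_nnCone_single α 0 _).mp hcone
      obtain ⟨l, hl0, hlμ⟩ := hchar μ hμwt
      have hsum : (l.map α).sum = a • α 0 := by
        rw [← ha, ← hlμ, sub_sub_cancel]
      have h2 : l.count 0 • α 0 + l.count 1 • α 1 = a • α 0 := by
        rw [← hcount l, hsum]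
      have hcast : ((l.count 0 : ℝ) - a) • α 0 + (l.count 1 : ℝ) • α 1 = 0 := by
        rw [sub_smul, Nat.cast_smul_eq_nsmul ℝ, Nat.cast_smul_eq_nsmul ℝ,
          Nat.cast_smul_eq_nsmul ℝ]
        have habel : (l.count 0 • α 0 : E) - a • α 0 + l.count 1 • α 1
            = (l.count 0 • α 0 + l.count 1 • α 1) - a • α 0 := by abel
        rw [habel, h2, sub_self]
      have hc1z : (l.count 1 : ℝ) = 0 := (pair_zero hα hcast).2
      have hnotmem : (1 : Fin 2) ∉ l := by
        rw [← List.count_eq_zero]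
        exact_mod_cast hc1z
      rcases eq_or_ne l [] with rfl | hlne
      · simp only [List.map_nil, List.sum_nil, sub_zero] at hlμ
        exact hlμ ▸ rfl
      · exact absurd (hzero l hlne hnotmem) hl0
    · rintro rfl
      exact ⟨hlamwt, by rw [sub_self]; exact zero_mem _⟩
  -- Part 4
  have part4 : wtJ α lam (wtSet wtSp) {0, 1} = wtSet wtSp := by
    ext μ
    constructor
    · exact fun h => h.1
    · intro hμ
      refine ⟨hμ, ?_⟩
      obtain ⟨l, _, hlμ⟩ := hchar μ hμ
      rw [mem_nnCone_pair]
      exact ⟨l.count 0, l.count 1, by rw [← hlμ, sub_sub_cancel, hcount l]⟩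
  -- Part 2
  have hwA : lam - α 1 ∈ wtJ α lam (wtSet wtSp) {1} := by
    refine ⟨(Submodule.ne_bot_iff _).mpr ⟨F 1 vlam, hwt1, hF1⟩, ?_⟩
    rw [sub_sub_cancel, mem_nnCone_single]
    exact ⟨1, (one_nsmul _).symm⟩
  have part2 : wtJ α lam (wtSet wtSp) {0} ⊂ wtJ α lam (wtSet wtSp) {1} := by
    rw [part1]
    constructor
    · intro μ hμ
      rw [Set.mem_singleton_iff] at hμ
      subst hμ
      exact ⟨hlamwt, by rw [sub_self]; exact zero_mem _⟩
    · intro hsub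
      have h := hsub hwA
      rw [Set.mem_singleton_iff] at h
      exact hα1ne (by
        have := sub_eq_self.mp h
        exact this)
  -- Part 3
  have hμstar : lam - α 1 - α 0 ∈ wtJ α lam (wtSet wtSp) {0, 1} := by
    refine ⟨(Submodule.ne_bot_iff _).mpr ⟨F 0 (F 1 vlam), hwt01, hF01⟩, ?_⟩
    rw [mem_nnCone_pair]
    exact ⟨1, 1, by rw [one_nsmul, one_nsmul]; abel⟩
  have part3 : wtJ α lam (wtSet wtSp) {1} ⊂ wtJ α lam (wtSet wtSp) {0, 1} := by
    constructor
    · rintro μ ⟨hw, hc⟩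
      refine ⟨hw, ?_⟩
      exact AddSubmonoid.closure_mono (Set.image_mono (by simp)) hc
    · intro hsub
      obtain ⟨-, hc⟩ := hsub hμstar
      rw [mem_nnCone_single] at hc
      obtain ⟨b, hb⟩ := hc
      have h' : α 0 + α 1 = b • α 1 := by
        rw [← hb]; abel
      have hz : (1 : ℝ) • α 0 + ((1 : ℝ) - b) • α 1 = 0 := by
        rw [one_smul, sub_smul, one_smul, Nat.cast_smul_eq_nsmul ℝ]
        have habel : α 0 + ((α 1) - b • α 1) = (α 0 + α 1) - b • α 1 := by abel
        rw [habel, h', sub_self]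
      have := (pair_zero hα hz).1
      norm_num at this
  exact ⟨part1, part2, part3, part4, part2.subset, part3.ne⟩
end
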